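/- arXiv:math/0305385 — 6 statements merged into one kernel-verified Lean document; each statement's English description precedes it below -/
import Mathlib

section
/- Let a, t ∈ ℂ∖{0} and y ∈ ℂ∖{0}, and set z = (y + y⁻¹)/2. For every k ∈ ℤ with |t|·q^{k−1} < 1, the numbers u_k(z) = ₂φ₁(ay, a/y; −q; q, tq^k) satisfy the recurrence 2z·u_k(z) = ((1 + a²t q^{k−1})/(a t q^{k−1}))·u_{k+1}(z) − ((1 − t q^{k−1})/(a t q^{k−1}))·u_{k−1}(z). -/
open Complex Filter Topology

/-- Finite q-shifted factorial `(a;q)_n`. -/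
noncomputable def qPoch (q a : ℂ) (n : ℕ) : ℂ := ∏ i ∈ Finset.range n, (1 - a * q ^ i)

/-- Infinite q-shifted factorial `(a;q)_∞`. -/
noncomputable def qPochInf (q a : ℂ) : ℂ := ∏' i : ℕ, (1 - a * q ^ i)

/-- Real infinite q-shifted factorial. -/
noncomputable def qPochInfR (q x : ℝ) : ℝ := ∏' i : ℕ, (1 - x * q ^ i)

/-- Basic hypergeometric series `₂φ₁(a,b;c;q,w)`. -/
noncomputable def phi21 (q a b c w : ℂ) : ℂ :=
  ∑' n : ℕ, (qPoch q a n * qPoch q b n) / (qPoch q c n * qPoch q q n) * w ^ n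

/-- Basic hypergeometric series `₃φ₂(a₁,a₂,a₃;b₁,b₂;q,w)`. -/
noncomputable def phi32 (q a1 a2 a3 b1 b2 w : ℂ) : ℂ :=
  ∑' n : ℕ, (qPoch q a1 n * qPoch q a2 n * qPoch q a3 n) /
    (qPoch q b1 n * qPoch q b2 n * qPoch q q n) * w ^ n

/-- Renormalised Jacobi theta function `θ(w) = (w;q)_∞ (q/w;q)_∞`. -/
noncomputable def jtheta (q w : ℂ) : ℂ := qPochInf q w * qPochInf q (q / w)

/-- The solution `u_k(z)` of the recurrence. -/
noncomputable def usol (q a t y : ℂ) (k : ℤ) : ℂ :=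
  phi21 q (a * y) (a / y) (-q) (t * q ^ k)

/-- The solution `v_k(z)` of the recurrence. -/
noncomputable def vsol (q a t y : ℂ) (k : ℤ) : ℂ :=
  (-1 : ℂ) ^ k * phi21 q (-(a * y)) (-(a / y)) (-q) (t * q ^ k)

/-- The solution `F_k(y)` of the recurrence. -/
noncomputable def Fsol (q a t y : ℂ) (k : ℤ) : ℂ :=
  (a * y) ^ (-k) * phi21 q (a * y) (-(a * y)) (q * y ^ 2) (-(q ^ (2 - k)) / (a ^ 2 * t))

/-- The connection coefficient `c(y;a,t)`. -/
noncomputable def cfun (q a t y : ℂ) : ℂ :=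
  (qPochInf q (a / y) * qPochInf q (-q / (a * y)) * qPochInf q (a * y * t) *
      qPochInf q (q / (a * y * t))) /
  (qPochInf q (-q) * qPochInf q (y⁻¹ ^ 2) * qPochInf q t * qPochInf q (q / t))

/-- The connection coefficient `d(y;a,t)`. -/
noncomputable def dfun (q a t y : ℂ) : ℂ :=
  (qPochInf q (-(a * y)) * qPochInf q (q * y / a) * qPochInf q (-(a * t) / (q * y)) *
      qPochInf q (-(q ^ 2 * y) / (a * t))) /
  (qPochInf q (-1) * qPochInf q (q * y ^ 2) * qPochInf q (-(a ^ 2 * t) / q) *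
      qPochInf q (-(q ^ 2) / (a ^ 2 * t)))

lemma qPoch_succ' (q a : ℂ) (n : ℕ) :
    qPoch q a (n + 1) = qPoch q a n * (1 - a * q ^ n) :=
  Finset.prod_range_succ _ _

set_option maxHeartbeats 2000000 in
theorem stmt0 (q : ℝ) (hq0 : 0 < q) (hq1 : q < 1)
    (a t y : ℂ) (ha : a ≠ 0) (ht : t ≠ 0) (hy : y ≠ 0)
    (z : ℂ) (hz : z = (y + y⁻¹) / 2)
    (k : ℤ) (hk : ‖t‖ * q ^ (k - 1) < 1) :
    2 * z * usol q a t y k =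
      ((1 + a ^ 2 * t * (q : ℂ) ^ (k - 1)) / (a * t * (q : ℂ) ^ (k - 1))) * usol q a t y (k + 1) -
      ((1 - t * (q : ℂ) ^ (k - 1)) / (a * t * (q : ℂ) ^ (k - 1))) * usol q a t y (k - 1) := by
  have hqC : (q : ℂ) ≠ 0 := Complex.ofReal_ne_zero.mpr hq0.ne'
  have habsq : ‖(q : ℂ)‖ = q := by
    simp [abs_of_pos hq0]
  set w : ℂ := t * (q : ℂ) ^ (k - 1 : ℤ) with hwdef
  clear_value w
  have hw0 : w ≠ 0 := by rw [hwdef]; exact mul_ne_zero ht (zpow_ne_zero _ hqC)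
  have hwabs : ‖w‖ < 1 := by
    rw [hwdef, norm_mul, norm_zpow, habsq]; exact hk
  have hfacR : ∀ n : ℕ, 0 < 1 - q * q ^ n ∧ 0 < 1 + q * q ^ n := by
    intro n
    have hp : 0 < q ^ n := pow_pos hq0 n
    have hpl : q ^ n ≤ 1 := pow_le_one₀ hq0.le hq1.le
    constructor <;> nlinarith
  have hfac1 : ∀ n : ℕ, (1 : ℂ) - (q : ℂ) * (q : ℂ) ^ n ≠ 0 := by
    intro n
    have h : ((1 - q * q ^ n : ℝ) : ℂ) = 1 - (q : ℂ) * (q : ℂ) ^ n := by push_cast; ring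
    rw [← h, Complex.ofReal_ne_zero]; exact (hfacR n).1.ne'
  have hfac2 : ∀ n : ℕ, (1 : ℂ) - (-(q : ℂ)) * (q : ℂ) ^ n ≠ 0 := by
    intro n
    have h : ((1 + q * q ^ n : ℝ) : ℂ) = 1 - (-(q : ℂ)) * (q : ℂ) ^ n := by push_cast; ring
    rw [← h, Complex.ofReal_ne_zero]; exact (hfacR n).2.ne'
  have hP1 : ∀ n, qPoch (q : ℂ) (q : ℂ) n ≠ 0 := by
    intro n
    unfold qPoch
    exact Finset.prod_ne_zero_iff.mpr fun i _ => hfac1 i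
  have hP2 : ∀ n, qPoch (q : ℂ) (-(q : ℂ)) n ≠ 0 := by
    intro n
    unfold qPoch
    exact Finset.prod_ne_zero_iff.mpr fun i _ => hfac2 i
  set c : ℕ → ℂ := fun n =>
    qPoch (q : ℂ) (a * y) n * qPoch (q : ℂ) (a / y) n /
      (qPoch (q : ℂ) (-(q : ℂ)) n * qPoch (q : ℂ) (q : ℂ) n) with hcdef
  clear_value c
  have hcsucc : ∀ n : ℕ, c (n + 1) =
      c n * ((1 - a * y * (q : ℂ) ^ n) * (1 - a / y * (q : ℂ) ^ n) /
        ((1 - (-(q : ℂ)) * (q : ℂ) ^ n) * (1 - (q : ℂ) * (q : ℂ) ^ n))) := by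
    intro n
    simp only [hcdef, qPoch_succ']
    field_simp
  have hsum : ∀ x : ℂ, ‖x‖ < 1 → Summable (fun n => c n * x ^ n) := by
    intro x hx
    have hx0 : (0 : ℝ) ≤ ‖x‖ := norm_nonneg x
    apply summable_of_ratio_norm_eventually_le (r := (1 + ‖x‖) / 2) (by linarith)
    have hq0c : Tendsto (fun n : ℕ => (q : ℂ) ^ n) atTop (𝓝 0) := by
      apply tendsto_pow_atTop_nhds_zero_of_norm_lt_one
      rw [habsq]; exact hq1
    have hA : Tendsto (fun n : ℕ => 1 - a * y * (q : ℂ) ^ n) atTop (𝓝 1) := by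
      simpa using tendsto_const_nhds.sub (hq0c.const_mul (a * y))
    have hB : Tendsto (fun n : ℕ => 1 - a / y * (q : ℂ) ^ n) atTop (𝓝 1) := by
      simpa using tendsto_const_nhds.sub (hq0c.const_mul (a / y))
    have hC : Tendsto (fun n : ℕ => 1 - (-(q : ℂ)) * (q : ℂ) ^ n) atTop (𝓝 1) := by
      simpa using tendsto_const_nhds.sub (hq0c.const_mul (-(q : ℂ)))
    have hD : Tendsto (fun n : ℕ => 1 - (q : ℂ) * (q : ℂ) ^ n) atTop (𝓝 1) := by
      simpa using tendsto_const_nhds.sub (hq0c.const_mul ((q : ℂ)))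
    have h2 : Tendsto (fun n : ℕ =>
        x * ((1 - a * y * (q : ℂ) ^ n) * (1 - a / y * (q : ℂ) ^ n) /
          ((1 - (-(q : ℂ)) * (q : ℂ) ^ n) * (1 - (q : ℂ) * (q : ℂ) ^ n)))) atTop (𝓝 x) := by
      have := tendsto_const_nhds (x := x) (f := atTop (α := ℕ)) |>.mul
        (((hA.mul hB).div (hC.mul hD) (by norm_num)))
      simpa using this
    have h1 : Tendsto (fun n : ℕ => ‖
        (x * ((1 - a * y * (q : ℂ) ^ n) * (1 - a / y * (q : ℂ) ^ n) /
          ((1 - (-(q : ℂ)) * (q : ℂ) ^ n) * (1 - (q : ℂ) * (q : ℂ) ^ n))))‖)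
        atTop (𝓝 ‖x‖) :=
      (continuous_norm.tendsto x).comp h2
    have hev : ∀ᶠ n in atTop, ‖
        (x * ((1 - a * y * (q : ℂ) ^ n) * (1 - a / y * (q : ℂ) ^ n) /
          ((1 - (-(q : ℂ)) * (q : ℂ) ^ n) * (1 - (q : ℂ) * (q : ℂ) ^ n))))‖
        ≤ (1 + ‖x‖) / 2 :=
      h1.eventually_le_const (by linarith)
    filter_upwards [hev] with n hn
    have e : c (n + 1) * x ^ (n + 1) = (c n * x ^ n) *
        (x * ((1 - a * y * (q : ℂ) ^ n) * (1 - a / y * (q : ℂ) ^ n) /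
          ((1 - (-(q : ℂ)) * (q : ℂ) ^ n) * (1 - (q : ℂ) * (q : ℂ) ^ n)))) := by
      rw [hcsucc n]; ring
    rw [e, norm_mul]
    calc ‖c n * x ^ n‖ * ‖x * ((1 - a * y * (q : ℂ) ^ n) * (1 - a / y * (q : ℂ) ^ n) /
          ((1 - (-(q : ℂ)) * (q : ℂ) ^ n) * (1 - (q : ℂ) * (q : ℂ) ^ n)))‖
        ≤ ‖c n * x ^ n‖ * ((1 + ‖x‖) / 2) := by
          gcongr
      _ = (1 + ‖x‖) / 2 * ‖c n * x ^ n‖ := mul_comm _ _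
  have hS1 : Summable (fun n => c n * w ^ n) := hsum w hwabs
  have hS2 : Summable (fun n => c n * (w * (q : ℂ)) ^ n) := by
    apply hsum
    rw [norm_mul, habsq]
    nlinarith [norm_nonneg w]
  have hS3 : Summable (fun n => c n * (w * (q : ℂ) ^ 2) ^ n) := by
    apply hsum
    rw [norm_mul, norm_pow, habsq]
    nlinarith [norm_nonneg w, sq_nonneg q]
  have husol : ∀ j : ℤ, usol (q : ℂ) a t y j = ∑' n : ℕ, c n * (t * (q : ℂ) ^ j) ^ n := by
    intro j
    simp only [usol, phi21, hcdef]
  have e2 : t * (q : ℂ) ^ (k : ℤ) = w * (q : ℂ) := by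
    rw [hwdef, show (k : ℤ) = (k - 1) + 1 by ring, zpow_add₀ hqC, zpow_one]; ring
  have e1 : t * (q : ℂ) ^ (k + 1 : ℤ) = w * (q : ℂ) ^ 2 := by
    rw [hwdef, mul_assoc, ← zpow_natCast (q : ℂ) 2, ← zpow_add₀ hqC]
    norm_num
    left
    congr 1
    omega
  set A : ℕ → ℂ := fun n => c n * (w * (q : ℂ) ^ 2) ^ n - c n * w ^ n with hAdef
  clear_value A
  have hSA : Summable A := by rw [hAdef]; exact hS3.sub hS1
  have hcsucc' : ∀ n : ℕ, c (n + 1) * ((1 - (-(q : ℂ)) * (q : ℂ) ^ n) * (1 - (q : ℂ) * (q : ℂ) ^ n))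
      = c n * ((1 - a * y * (q : ℂ) ^ n) * (1 - a / y * (q : ℂ) ^ n)) := by
    intro n
    rw [hcsucc n, mul_assoc, div_mul_cancel₀]
    exact mul_ne_zero (hfac2 n) (hfac1 n)
  have hinv : y * y⁻¹ = 1 := mul_inv_cancel₀ hy
  have hAB : ∀ n : ℕ, A (n + 1) =
      -(c n * (a ^ 2 * (q : ℂ) ^ (2 * n) + 1 - 2 * z * a * (q : ℂ) ^ n) * w ^ (n + 1)) := by
    intro n
    simp only [hAdef]
    rw [hz]
    linear_combination (-(w ^ (n + 1))) * hcsucc' n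
      - (w ^ (n + 1) * c n * a ^ 2 * (q : ℂ) ^ (2 * n)) * hinv
  have hg : ((1 : ℂ) + a ^ 2 * w) * (∑' n : ℕ, c n * (w * (q : ℂ) ^ 2) ^ n)
      - (1 - w) * (∑' n : ℕ, c n * w ^ n)
      - 2 * z * a * w * (∑' n : ℕ, c n * (w * (q : ℂ)) ^ n)
      = ∑' n : ℕ, (A n - A (n + 1)) := by
    rw [← tsum_mul_left, ← tsum_mul_left, ← tsum_mul_left,
      ← Summable.tsum_sub (hS3.mul_left _) (hS1.mul_left _),
      ← Summable.tsum_sub ((hS3.mul_left _).sub (hS1.mul_left _)) (hS2.mul_left _)]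
    apply tsum_congr
    intro n
    rw [hAB n]
    simp only [hAdef]
    ring
  have htel : ∑' n : ℕ, (A n - A (n + 1)) = A 0 := by
    have h2 : Summable (fun n => A (n + 1)) := (summable_nat_add_iff 1).mpr hSA
    rw [Summable.tsum_sub hSA h2, Summable.tsum_eq_zero_add hSA]
    ring
  have hA0 : A 0 = 0 := by simp [hAdef]
  have key : ((1 : ℂ) + a ^ 2 * w) * (∑' n : ℕ, c n * (w * (q : ℂ) ^ 2) ^ n)
      - (1 - w) * (∑' n : ℕ, c n * w ^ n)
      - 2 * z * a * w * (∑' n : ℕ, c n * (w * (q : ℂ)) ^ n) = 0 := by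
    rw [hg, htel, hA0]
  have hden : a * t * (q : ℂ) ^ (k - 1 : ℤ) ≠ 0 :=
    mul_ne_zero (mul_ne_zero ha ht) (zpow_ne_zero _ hqC)
  rw [husol (k + 1), husol k, husol (k - 1), e1, e2]
  rw [div_mul_eq_mul_div, div_mul_eq_mul_div, div_sub_div_same, eq_comm, div_eq_iff hden,
    eq_comm]
  simp only [hwdef] at key ⊢
  linear_combination -key
end

section
/- Let a, t ∈ ℂ∖{0} and y ∈ ℂ∖{0} with y² ∉ {q^{−n} : n ∈ ℕ, n ≥ 1}, and set z = (y + y⁻¹)/2. For every k ∈ ℤ with |q^{1−k}/(a²t)| < 1, the numbers F_k(y) = (ay)^{−k} ₂φ₁(ay, −ay; qy²; q, −q^{2−k}/(a²t)) satisfy the recurrence 2z·F_k(y) = ((1 + a²t q^{k−1})/(a t q^{k−1}))·F_{k+1}(y) − ((1 − t q^{k−1})/(a t q^{k−1}))·F_{k−1}(y). -/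
open Complex Filter Topology

lemma expneg_le_one_sub {u : ℝ} (h0 : 0 ≤ u) (h2 : u ≤ 1/2) : Real.exp (-(2*u)) ≤ 1 - u := by
  have h1 : Real.exp (-(2*u)) ≤ 1/(1+2*u) := by
    rw [Real.exp_neg, one_div]
    exact inv_anti₀ (by linarith) (by linarith [Real.add_one_le_exp (2*u)])
  refine h1.trans ?_
  rw [div_le_iff₀ (by linarith)]
  nlinarith

lemma qnorm (q : ℝ) (hq0 : 0 < q) (i : ℕ) : ‖((q:ℂ))^i‖ = q ^ i := by
  rw [norm_pow, Complex.norm_real, Real.norm_eq_abs, abs_of_pos hq0]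

lemma qsum_le (q : ℝ) (hq0 : 0 < q) (hq1 : q < 1) (n : ℕ) :
    ∑ i ∈ Finset.range n, q ^ i ≤ (1-q)⁻¹ := by
  rw [← tsum_geometric_of_lt_one hq0.le hq1]
  exact Summable.sum_le_tsum _ (fun i _ => by positivity) (summable_geometric_of_lt_one hq0.le hq1)

lemma qPoch_norm_le (q : ℝ) (hq0 : 0 < q) (hq1 : q < 1) (x : ℂ) (n : ℕ) :
    ‖qPoch q x n‖ ≤ Real.exp (‖x‖ * (1-q)⁻¹) := by
  have h1 : ‖qPoch (q:ℂ) x n‖ ≤ ∏ i ∈ Finset.range n, Real.exp (‖x‖ * q^i) := by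
    refine (Finset.norm_prod_le _ _).trans (Finset.prod_le_prod (fun i _ => norm_nonneg _) ?_)
    intro i _
    calc ‖1 - x * (q:ℂ)^i‖ ≤ ‖(1:ℂ)‖ + ‖x * (q:ℂ)^i‖ := norm_sub_le _ _
      _ = ‖x‖ * q^i + 1 := by rw [norm_mul, qnorm q hq0, norm_one]; ring
      _ ≤ Real.exp (‖x‖ * q^i) := Real.add_one_le_exp _
  refine h1.trans ?_
  rw [← Real.exp_sum, Real.exp_le_exp, ← Finset.mul_sum]
  exact mul_le_mul_of_nonneg_left (qsum_le q hq0 hq1 n) (norm_nonneg _)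

lemma qPoch_norm_lower (q : ℝ) (hq0 : 0 < q) (hq1 : q < 1) (x : ℂ)
    (hx : ∀ i : ℕ, (1:ℂ) - x * (q:ℂ)^i ≠ 0) :
    ∃ δ > 0, ∀ n, δ ≤ ‖qPoch q x n‖ := by
  obtain ⟨N, hN⟩ : ∃ N : ℕ, ‖x‖ * q ^ N ≤ 1/2 := by
    have h := (tendsto_pow_atTop_nhds_zero_of_lt_one hq0.le hq1).const_mul ‖x‖
    rw [mul_zero] at h
    have := (h.eventually_le_const (by norm_num : (0:ℝ) < 1/2)).exists
    simpa using this
  have hpos : ∀ n, 0 < ‖qPoch q x n‖ := by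
    intro n
    rw [norm_pos_iff]
    exact Finset.prod_ne_zero_iff.2 (fun i _ => hx i)
  set m : ℝ := (Finset.range (N+1)).inf' (by simp) (fun n => ‖qPoch q x n‖) with hm
  have hmpos : 0 < m := by
    rw [hm, Finset.lt_inf'_iff]
    exact fun n _ => hpos n
  refine ⟨m * Real.exp (-(1-q)⁻¹), by positivity, ?_⟩
  intro n
  rcases le_or_gt n N with h | h
  · calc m * Real.exp (-(1-q)⁻¹) ≤ m * 1 := by
          refine mul_le_mul_of_nonneg_left ?_ hmpos.le
          rw [Real.exp_le_one_iff]
          simp [inv_nonneg.2 (by linarith : (0:ℝ) ≤ 1 - q)]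
      _ = m := mul_one m
      _ ≤ ‖qPoch q x n‖ := Finset.inf'_le _ (Finset.mem_range.2 (by omega))
  · obtain ⟨j, rfl⟩ : ∃ j, n = N + j := ⟨n - N, by omega⟩
    have key : Real.exp (-(1-q)⁻¹) ≤ ∏ i ∈ Finset.range j, ‖1 - x * (q:ℂ)^(N+i)‖ := by
      have hfac : ∀ i : ℕ, Real.exp (-(2 * (‖x‖ * q^(N+i)))) ≤ ‖1 - x * (q:ℂ)^(N+i)‖ := by
        intro i
        have hu0 : 0 ≤ ‖x‖ * q^(N+i) := by positivity
        have hu2 : ‖x‖ * q^(N+i) ≤ 1/2 := by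
          refine le_trans ?_ hN
          have : q^(N+i) ≤ q^N := pow_le_pow_of_le_one hq0.le hq1.le (by omega)
          exact mul_le_mul_of_nonneg_left this (norm_nonneg _)
        refine (expneg_le_one_sub hu0 hu2).trans ?_
        calc 1 - ‖x‖ * q^(N+i) = ‖(1:ℂ)‖ - ‖x * (q:ℂ)^(N+i)‖ := by
              rw [norm_one, norm_mul, qnorm q hq0]
          _ ≤ ‖1 - x * (q:ℂ)^(N+i)‖ := norm_sub_norm_le _ _
      calc Real.exp (-(1-q)⁻¹) ≤ Real.exp (∑ i ∈ Finset.range j, -(2 * (‖x‖ * q^(N+i)))) := by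
            rw [Real.exp_le_exp]
            have : ∑ i ∈ Finset.range j, (2 * (‖x‖ * q^(N+i))) ≤ (1-q)⁻¹ := by
              have h1 : ∀ i, 2 * (‖x‖ * q^(N+i)) = (2 * (‖x‖ * q^N)) * q^i := by
                intro i; rw [pow_add]; ring
              calc ∑ i ∈ Finset.range j, (2 * (‖x‖ * q^(N+i)))
                  = (2 * (‖x‖ * q^N)) * ∑ i ∈ Finset.range j, q^i := by
                    rw [Finset.mul_sum]; exact Finset.sum_congr rfl (fun i _ => h1 i)
                _ ≤ 1 * (1-q)⁻¹ := by
                    refine mul_le_mul (by linarith) (qsum_le q hq0 hq1 j) ?_ (by norm_num)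
                    exact Finset.sum_nonneg (fun i _ => by positivity)
                _ = (1-q)⁻¹ := one_mul _
            rw [Finset.sum_neg_distrib]
            linarith
        _ = ∏ i ∈ Finset.range j, Real.exp (-(2 * (‖x‖ * q^(N+i)))) := Real.exp_sum _ _
        _ ≤ ∏ i ∈ Finset.range j, ‖1 - x * (q:ℂ)^(N+i)‖ :=
            Finset.prod_le_prod (fun i _ => (Real.exp_pos _).le) (fun i _ => hfac i)
    calc m * Real.exp (-(1-q)⁻¹) ≤ ‖qPoch q x N‖ * ∏ i ∈ Finset.range j, ‖1 - x * (q:ℂ)^(N+i)‖ := by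
          refine mul_le_mul (Finset.inf'_le _ (Finset.mem_range.2 (by omega))) key (Real.exp_pos _).le (norm_nonneg _)
      _ = ‖qPoch q x (N+j)‖ := by
          rw [qPoch, qPoch, Finset.prod_range_add, norm_mul, norm_prod]
          rw [norm_prod]

noncomputable def qc (q a y : ℂ) (n : ℕ) : ℂ :=
  qPoch q (a*y) n * qPoch q (-(a*y)) n / (qPoch q (q*y^2) n * qPoch q q n)

lemma qc_rec (q a y : ℂ)
    (hd1 : ∀ i : ℕ, (1:ℂ) - (q*y^2) * q^i ≠ 0)
    (hd2 : ∀ i : ℕ, (1:ℂ) - q * q^i ≠ 0) (n : ℕ) :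
    qc q a y (n+1) * ((1 - q^(n+1)) * (q^(n+1)*y^2 - 1)) =
    qc q a y n * (a^2*y^2*q^(2*n) - 1) := by
  have hden1 : qPoch q (q*y^2) n ≠ 0 := Finset.prod_ne_zero_iff.2 (fun i _ => hd1 i)
  have hden2 : qPoch q q n ≠ 0 := Finset.prod_ne_zero_iff.2 (fun i _ => hd2 i)
  have e1 : qPoch q (a*y) (n+1) = qPoch q (a*y) n * (1 - (a*y)*q^n) := Finset.prod_range_succ _ _
  have e2 : qPoch q (-(a*y)) (n+1) = qPoch q (-(a*y)) n * (1 - (-(a*y))*q^n) := Finset.prod_range_succ _ _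
  have e3 : qPoch q (q*y^2) (n+1) = qPoch q (q*y^2) n * (1 - (q*y^2)*q^n) := Finset.prod_range_succ _ _
  have e4 : qPoch q q (n+1) = qPoch q q n * (1 - q*q^n) := Finset.prod_range_succ _ _
  unfold qc
  rw [e1, e2, e3, e4]
  simp only [div_mul_eq_mul_div]
  rw [div_eq_div_iff (mul_ne_zero (mul_ne_zero hden1 (hd1 n)) (mul_ne_zero hden2 (hd2 n)))
    (mul_ne_zero hden1 hden2)]
  ring

set_option maxHeartbeats 1000000 in
lemma summable_qc (q : ℝ) (hq0 : 0 < q) (hq1 : q < 1) (a y : ℂ)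
    (hd1 : ∀ i : ℕ, (1:ℂ) - ((q:ℂ)*y^2) * (q:ℂ)^i ≠ 0)
    (hd2 : ∀ i : ℕ, (1:ℂ) - (q:ℂ) * (q:ℂ)^i ≠ 0)
    (v : ℂ) (hv : ‖v‖ < 1) :
    Summable (fun n => qc q a y n * v^n) := by
  obtain ⟨δ1, hδ1, h1⟩ := qPoch_norm_lower q hq0 hq1 ((q:ℂ)*y^2) hd1
  obtain ⟨δ2, hδ2, h2⟩ := qPoch_norm_lower q hq0 hq1 (q:ℂ) hd2
  set E : ℝ := Real.exp (‖a*y‖*(1-q)⁻¹) * Real.exp (‖-(a*y)‖*(1-q)⁻¹) with hE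
  have hEpos : 0 < E := by positivity
  apply Summable.of_norm
  refine Summable.of_nonneg_of_le (fun n => norm_nonneg _) (fun n => ?_)
    ((summable_geometric_of_lt_one (norm_nonneg v) hv).mul_left (E / (δ1*δ2)))
  have hb : ‖qc q a y n‖ ≤ E / (δ1*δ2) := by
    unfold qc
    rw [norm_div, norm_mul, norm_mul]
    refine div_le_div₀ hEpos.le ?_ (by positivity) ?_
    · exact mul_le_mul (qPoch_norm_le q hq0 hq1 _ n) (qPoch_norm_le q hq0 hq1 _ n)
        (norm_nonneg _) (Real.exp_pos _).le
    · exact mul_le_mul (h1 n) (h2 n) hδ2.le (norm_nonneg _)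
  rw [norm_mul, norm_pow]
  exact mul_le_mul_of_nonneg_right hb (by positivity)


lemma key_identity (q : ℝ) (hq0 : 0 < q) (hq1 : q < 1) (a y : ℂ) (hy : y ≠ 0)
    (hd1 : ∀ i : ℕ, (1:ℂ) - ((q:ℂ)*y^2) * (q:ℂ)^i ≠ 0)
    (hd2 : ∀ i : ℕ, (1:ℂ) - (q:ℂ) * (q:ℂ)^i ≠ 0)
    (u : ℂ) (hu : ‖u‖ < 1) :
    (y + y⁻¹) * ∑' n:ℕ, qc q a y n * ((q:ℂ)*u)^n
      = y⁻¹*(1 - u) * ∑' n:ℕ, qc q a y n * u^n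
        + y*(1 + a^2*u) * ∑' n:ℕ, qc q a y n * ((q:ℂ)^2*u)^n := by
  have hq : (q:ℂ) ≠ 0 := by exact_mod_cast hq0.ne'
  have hnq : ‖(q:ℂ)‖ = q := by rw [Complex.norm_real, Real.norm_eq_abs, abs_of_pos hq0]
  have hqu : ‖(q:ℂ)*u‖ < 1 := by
    rw [norm_mul, hnq]; nlinarith [norm_nonneg u]
  have hq2u : ‖(q:ℂ)^2*u‖ < 1 := by
    rw [norm_mul, norm_pow, hnq]; nlinarith [norm_nonneg u, sq_nonneg q]
  have hS0 := summable_qc q hq0 hq1 a y hd1 hd2 ((q:ℂ)*u) hqu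
  have hSp := summable_qc q hq0 hq1 a y hd1 hd2 u hu
  have hSm := summable_qc q hq0 hq1 a y hd1 hd2 ((q:ℂ)^2*u) hq2u
  set c : ℕ → ℂ := qc q a y with hc
  set H : ℕ → ℂ := fun n => y⁻¹ * (c n * u^n) + y * (c n * ((q:ℂ)^2*u)^n)
    - (y + y⁻¹) * (c n * ((q:ℂ)*u)^n) with hH
  set P : ℕ → ℂ := fun n => (u*y⁻¹) * (c n * u^n) - (a^2*u*y) * (c n * ((q:ℂ)^2*u)^n) with hP
  have hHsum : Summable H := ((hSp.mul_left y⁻¹).add (hSm.mul_left y)).sub (hS0.mul_left (y+y⁻¹))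
  have hH0 : H 0 = 0 := by simp [hH]; ring
  have hHP : ∀ n, H (n+1) = P n := by
    intro n
    have hrec := qc_rec (q:ℂ) a y hd1 hd2 n
    have : y * H (n+1) = y * P n := by
      simp only [hH, hP]
      field_simp
      linear_combination (-(u^(n+1))) * hrec
    exact mul_left_cancel₀ hy this
  have hsum_eq : ∑' n, H n = ∑' n, P n := by
    rw [Summable.tsum_eq_zero_add hHsum, hH0, zero_add]
    exact tsum_congr (fun n => hHP n)
  have hHval : ∑' n, H n = y⁻¹ * (∑' n, c n * u^n) + y * (∑' n, c n * ((q:ℂ)^2*u)^n)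
      - (y + y⁻¹) * (∑' n, c n * ((q:ℂ)*u)^n) := by
    rw [hH, Summable.tsum_sub ((hSp.mul_left y⁻¹).add (hSm.mul_left y)) (hS0.mul_left (y+y⁻¹)),
      Summable.tsum_add (hSp.mul_left y⁻¹) (hSm.mul_left y), tsum_mul_left, tsum_mul_left, tsum_mul_left]
  have hPval : ∑' n, P n = (u*y⁻¹) * (∑' n, c n * u^n)
      - (a^2*u*y) * (∑' n, c n * ((q:ℂ)^2*u)^n) := by
    rw [hP, Summable.tsum_sub (hSp.mul_left _) (hSm.mul_left _), tsum_mul_left, tsum_mul_left]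
  rw [hHval, hPval] at hsum_eq
  linear_combination (-1 : ℂ) * hsum_eq

lemma phi21_qc (q a y v : ℂ) :
    phi21 q (a*y) (-(a*y)) (q*y^2) v = ∑' n : ℕ, qc q a y n * v^n := rfl


theorem stmt2 (q : ℝ) (hq0 : 0 < q) (hq1 : q < 1)
    (a t y : ℂ) (ha : a ≠ 0) (ht : t ≠ 0) (hy : y ≠ 0)
    (hy2 : ∀ n : ℕ, 1 ≤ n → y ^ 2 ≠ (q : ℂ) ^ (-(n : ℤ)))
    (z : ℂ) (hz : z = (y + y⁻¹) / 2)
    (k : ℤ) (hk : ‖(q : ℂ) ^ (1 - k) / (a ^ 2 * t)‖ < 1) :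
    2 * z * Fsol q a t y k =
      ((1 + a ^ 2 * t * (q : ℂ) ^ (k - 1)) / (a * t * (q : ℂ) ^ (k - 1))) * Fsol q a t y (k + 1) -
      ((1 - t * (q : ℂ) ^ (k - 1)) / (a * t * (q : ℂ) ^ (k - 1))) * Fsol q a t y (k - 1) := by
  have hq : (q:ℂ) ≠ 0 := by exact_mod_cast hq0.ne'
  have hay : a * y ≠ 0 := mul_ne_zero ha hy
  have ha2t : a^2 * t ≠ 0 := mul_ne_zero (pow_ne_zero _ ha) ht
  have hd2 : ∀ i : ℕ, (1:ℂ) - (q:ℂ) * (q:ℂ)^i ≠ 0 := by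
    intro i h
    have h' : ((1 - q*q^i : ℝ) : ℂ) = 0 := by push_cast; linear_combination h
    rw [Complex.ofReal_eq_zero] at h'
    have hle : q^i ≤ 1 := pow_le_one₀ hq0.le hq1.le
    nlinarith
  have hd1 : ∀ i : ℕ, (1:ℂ) - ((q:ℂ)*y^2) * (q:ℂ)^i ≠ 0 := by
    intro i h
    apply hy2 (i+1) (by omega)
    have hqi : ((q:ℂ))^(i+1) ≠ 0 := pow_ne_zero _ hq
    have hmul : y^2 * (q:ℂ)^(i+1) = 1 := by linear_combination -h
    have : y^2 = ((q:ℂ)^(i+1))⁻¹ := eq_inv_of_mul_eq_one_left (by linear_combination hmul)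
    rw [this, ← zpow_natCast (q:ℂ) (i+1), ← zpow_neg]
  obtain ⟨u, hudef⟩ : ∃ u : ℂ, u = -((q:ℂ)^(1-k)) / (a^2*t) := ⟨_, rfl⟩
  have hu : ‖u‖ < 1 := by
    rw [hudef, neg_div, norm_neg]
    exact hk
  have hu0 : u ≠ 0 := by
    rw [hudef]
    exact div_ne_zero (neg_ne_zero.2 (zpow_ne_zero _ hq)) ha2t
  have key := key_identity q hq0 hq1 a y hy hd1 hd2 u hu
  -- rewrite the three Fsol values
  have hz1 : (q:ℂ)^(2-k) = (q:ℂ) * (q:ℂ)^(1-k) := by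
    rw [show (2-k : ℤ) = 1 + (1-k) by ring, zpow_add₀ hq, zpow_one]
  have hz2 : (q:ℂ)^(3-k) = (q:ℂ)^2 * (q:ℂ)^(1-k) := by
    rw [show (3-k : ℤ) = 2 + (1-k) by ring, zpow_add₀ hq,
      show ((2:ℤ)) = ((2:ℕ):ℤ) from rfl, zpow_natCast]
  have e0 : Fsol q a t y k = (a*y)^(-k) * ∑' n : ℕ, qc q a y n * ((q:ℂ)*u)^n := by
    rw [Fsol, show -((q:ℂ)^(2-k))/(a^2*t) = (q:ℂ)*u by rw [hz1, hudef]; ring, phi21_qc]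
  have e1 : Fsol q a t y (k+1) = (a*y)^(-k) * (a*y)⁻¹ * ∑' n : ℕ, qc q a y n * u^n := by
    rw [Fsol, show (2-(k+1) : ℤ) = 1-k by ring,
      show -((q:ℂ)^(1-k))/(a^2*t) = u from hudef.symm, phi21_qc,
      show (-(k+1) : ℤ) = -k + (-1) by ring, zpow_add₀ hay, zpow_neg_one]
  have e2 : Fsol q a t y (k-1) = (a*y)^(-k) * (a*y) * ∑' n : ℕ, qc q a y n * ((q:ℂ)^2*u)^n := by
    rw [Fsol, show (2-(k-1) : ℤ) = 3-k by ring,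
      show -((q:ℂ)^(3-k))/(a^2*t) = (q:ℂ)^2*u by rw [hz2, hudef]; ring, phi21_qc,
      show (-(k-1) : ℤ) = -k + 1 by ring, zpow_add₀ hay, zpow_one]
  have hQ : (q:ℂ)^(k-1) = (-(a^2*t)*u)⁻¹ := by
    have hzk : (q:ℂ)^(1-k) = -(a^2*t)*u := by rw [hudef]; field_simp
    rw [show (k-1 : ℤ) = -(1-k) by ring, zpow_neg, hzk]
  have hV : -(a^2*t)*u ≠ 0 := mul_ne_zero (neg_ne_zero.2 ha2t) hu0
  have hc1 : (1 + a^2*t*(-(a^2*t)*u)⁻¹)/(a*t*(-(a^2*t)*u)⁻¹) * (a*y)⁻¹ = y⁻¹*(1-u) := by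
    field_simp
    ring
  have hc2 : -((1 - t*(-(a^2*t)*u)⁻¹)/(a*t*(-(a^2*t)*u)⁻¹)) * (a*y) = y*(1+a^2*u) := by
    field_simp
    ring
  rw [hz, e0, e1, e2, hQ]
  linear_combination ((a*y)^(-k)) * key
    - ((a*y)^(-k) * ∑' n : ℕ, qc q a y n * u^n) * hc1
    - ((a*y)^(-k) * ∑' n : ℕ, qc q a y n * ((q:ℂ)^2*u)^n) * hc2
end

section
/- Let ψ ∈ ℝ, r ∈ ℝ∖{0}, a = q^{1/2} e^{iψ}, t = i r e^{−iψ}, and assume t ∉ ℝ_{>0}. Define a_k = |r|^{−1} q^{−k} √(1 − 2 r q^k sin ψ + r² q^{2k}) and α_k = e^{iφ_k} q^{k/2}, where (φ_k)_{k∈ℤ} is any real sequence satisfying φ_{k+1} − φ_k ≡ arg(1 + i r e^{iψ} q^k) − (π/2)·sgn(r) (mod 2π). Then a_k > 0 for every k ∈ ℤ, and whenever a sequence (f_k)_{k∈ℤ} of complex numbers satisfies 2z·f_k = ((1 + a²t q^{k−1})/(a t q^{k−1}))·f_{k+1} − ((1 − t q^{k−1})/(a t q^{k−1}))·f_{k−1}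 for some z ∈ ℂ and all k ∈ ℤ, the sequence g_k = α_k f_k satisfies the symmetric recurrence 2z·g_k = a_k·g_{k+1} + a_{k−1}·g_{k−1} for all k ∈ ℤ. -/
open Complex Filter Topology

theorem stmt6
    (q : ℝ) (hq0 : 0 < q) (hq1 : q < 1)
    (ψ r : ℝ) (hr : r ≠ 0)
    (a t : ℂ)
    (ha : a = (Real.sqrt q : ℂ) * Complex.exp (Complex.I * ψ))
    (ht : t = Complex.I * (r : ℂ) * Complex.exp (-(Complex.I * ψ)))
    (htpos : ∀ x : ℝ, 0 < x → t ≠ (x : ℂ))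
    (aseq : ℤ → ℝ)
    (haseq : ∀ k : ℤ, aseq k =
      |r|⁻¹ * q ^ (-k) * Real.sqrt (1 - 2 * r * q ^ k * Real.sin ψ + r ^ 2 * q ^ (2 * k)))
    (φ : ℤ → ℝ)
    (hφ : ∀ k : ℤ, ∃ m : ℤ, φ (k + 1) - φ k =
      (1 + Complex.I * (r : ℂ) * Complex.exp (Complex.I * ψ) * (q : ℂ) ^ k).arg
        - (Real.pi / 2) * Real.sign r + 2 * Real.pi * m)
    (α : ℤ → ℂ)
    (hα : ∀ k : ℤ, α k = Complex.exp (Complex.I * φ k) * ((q ^ ((k : ℝ) / 2) : ℝ) : ℂ))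
    :
    (∀ k : ℤ, 0 < aseq k) ∧
    ∀ (z : ℂ) (f : ℤ → ℂ),
      (∀ k : ℤ, 2 * z * f k =
          ((1 + a ^ 2 * t * (q : ℂ) ^ (k - 1)) / (a * t * (q : ℂ) ^ (k - 1))) * f (k + 1) -
          ((1 - t * (q : ℂ) ^ (k - 1)) / (a * t * (q : ℂ) ^ (k - 1))) * f (k - 1)) →
      ∀ k : ℤ, 2 * z * (α k * f k) =
        (aseq k : ℂ) * (α (k + 1) * f (k + 1)) + (aseq (k - 1) : ℂ) * (α (k - 1) * f (k - 1)) := by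
  have hqC : (q:ℂ) ≠ 0 := Complex.ofReal_ne_zero.mpr hq0.ne'
  have hrC : (r:ℂ) ≠ 0 := Complex.ofReal_ne_zero.mpr hr
  have hs2 : ((Real.sqrt q : ℝ) : ℂ)^2 = (q:ℂ) := by
    rw [← Complex.ofReal_pow, Real.sq_sqrt hq0.le]
  have hsr : Real.sign r * r = |r| := by
    rcases hr.lt_or_gt with h | h
    · rw [Real.sign_of_neg h, abs_of_neg h]; ring
    · rw [Real.sign_of_pos h, abs_of_pos h]; ring
  set E : ℂ := Complex.exp (Complex.I * ψ) with hE
  have hEE : E * Complex.exp (-(Complex.I * ψ)) = 1 := by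
    rw [hE, ← Complex.exp_add]; simp
  set w : ℤ → ℂ := fun k => 1 + Complex.I * (r:ℂ) * E * (q:ℂ)^k with hwdef
  have hwapp : ∀ k : ℤ, w k = 1 + Complex.I * (r:ℂ) * E * (q:ℂ)^k := fun k => rfl
  have hEc : E = ((Real.cos ψ :ℝ):ℂ) + ((Real.sin ψ:ℝ):ℂ) * Complex.I := by
    rw [hE, mul_comm, Complex.exp_mul_I, ← Complex.ofReal_cos, ← Complex.ofReal_sin]
  -- real/imaginary decomposition of w
  have hwk_eq : ∀ k : ℤ, w k =
      ((1 - r * q^k * Real.sin ψ : ℝ):ℂ) + ((r * q^k * Real.cos ψ : ℝ):ℂ) * Complex.I := by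
    intro k
    rw [hwapp, hEc]
    push_cast
    ring_nf
    rw [Complex.I_sq]
    ring
  have habsw : ∀ k : ℤ, Real.sqrt (1 - 2 * r * q ^ k * Real.sin ψ + r ^ 2 * q ^ (2 * k))
      = ‖w k‖ := by
    intro k
    rw [Complex.norm_def, hwk_eq k]
    rw [show Complex.normSq (((1 - r * q^k * Real.sin ψ : ℝ):ℂ) + ((r * q^k * Real.cos ψ : ℝ):ℂ) * Complex.I)
        = (1 - r * q^k * Real.sin ψ)^2 + (r * q^k * Real.cos ψ)^2 from by
      exact_mod_cast Complex.normSq_add_mul_I _ _]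
    congr 1
    rw [show (2*k) = k + k from two_mul k, zpow_add₀ hq0.ne']
    linear_combination (-(r^2 * q^k * q^k)) * Real.sin_sq_add_cos_sq ψ
  have haseq' : ∀ k : ℤ, aseq k = |r|⁻¹ * q ^ (-k) * ‖w k‖ := by
    intro k; rw [haseq k, habsw k]
  have hconjw : ∀ k : ℤ, (starRingEnd ℂ) (w k) = 1 - t * (q:ℂ)^k := by
    intro k
    rw [hwk_eq k, ht]
    simp only [map_add, map_mul, map_one, Complex.conj_I, Complex.conj_ofReal]
    rw [show Complex.exp (-(Complex.I * ψ)) = ((Real.cos ψ :ℝ):ℂ) - ((Real.sin ψ:ℝ):ℂ) * Complex.I from by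
      rw [show -(Complex.I * (ψ:ℂ)) = Complex.I * ((-ψ : ℝ):ℂ) by push_cast; ring, mul_comm,
        Complex.exp_mul_I, ← Complex.ofReal_cos, ← Complex.ofReal_sin, Real.cos_neg, Real.sin_neg]
      push_cast; ring]
    push_cast
    ring_nf
    rw [Complex.I_sq]
    ring
  have hw_ne : ∀ k : ℤ, w k ≠ 0 := by
    intro k h
    have h2 : (starRingEnd ℂ) (w k) = 0 := by rw [h]; simp
    rw [hconjw k] at h2
    have h3 : t = ((q:ℂ)^k)⁻¹ := eq_inv_of_mul_eq_one_left (by linear_combination -h2)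
    have ht1 : t = ((q ^ (-k) : ℝ):ℂ) := by
      rw [h3]; push_cast; rw [zpow_neg]
    exact htpos (q ^ (-k)) (zpow_pos hq0 _) ht1
  have hpos : ∀ k : ℤ, 0 < aseq k := by
    intro k
    rw [haseq' k]
    have := norm_pos_iff.mpr (hw_ne k)
    positivity
  refine ⟨hpos, ?_⟩
  -- products
  have hat : a * t = Complex.I * (r:ℂ) * ((Real.sqrt q : ℝ):ℂ) := by
    rw [ha, ht]
    linear_combination (Complex.I * (r:ℂ) * ((Real.sqrt q : ℝ):ℂ)) * hEE
  have ha2t : a^2 * t = Complex.I * (r:ℂ) * E * (q:ℂ) := by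
    rw [ha, ht]
    linear_combination (Complex.I * (r:ℂ) * E * (q:ℂ)) * hEE +
      (Complex.I * (r:ℂ) * Complex.exp (-(Complex.I * ψ)) * E^2) * hs2
  have hwk_rec : ∀ k : ℤ, 1 + a^2*t*(q:ℂ)^(k-1) = w k := by
    intro k
    rw [ha2t, hwapp]
    rw [show (q:ℂ)^(k-1) = (q:ℂ)^k / q from by rw [zpow_sub₀ hqC]; simp]
    field_simp
  -- the sign exponential
  have hsgnexp : Complex.exp (Complex.I * ((-(Real.pi / 2 * Real.sign r) : ℝ):ℂ))
      = -(Complex.I * ((Real.sign r : ℝ):ℂ)) := by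
    have hIpi : Complex.exp (Complex.I * ((Real.pi/2 : ℝ):ℂ)) = Complex.I := by
      rw [mul_comm, Complex.exp_mul_I]
      push_cast
      rw [show ((Real.pi:ℂ)/2) = ((Real.pi/2 : ℝ):ℂ) by push_cast; ring,
        ← Complex.ofReal_cos, ← Complex.ofReal_sin, Real.cos_pi_div_two, Real.sin_pi_div_two]
      simp
    rcases hr.lt_or_gt with h | h
    · rw [Real.sign_of_neg h]
      rw [show ((-(Real.pi / 2 * (-1:ℝ)) : ℝ):ℂ) = ((Real.pi/2 : ℝ):ℂ) by push_cast; ring]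
      rw [hIpi]; push_cast; ring
    · rw [Real.sign_of_pos h]
      rw [show Complex.I * ((-(Real.pi / 2 * (1:ℝ)) : ℝ):ℂ) = -(Complex.I * ((Real.pi/2 : ℝ):ℂ)) by push_cast; ring]
      rw [Complex.exp_neg, hIpi]
      push_cast
      rw [Complex.inv_I]
      ring
  -- the key alpha relation
  have αrel : ∀ k : ℤ, α (k+1) * ((‖w k‖ : ℝ):ℂ)
      = α k * w k * (-(Complex.I * ((Real.sign r : ℝ):ℂ))) * ((Real.sqrt q : ℝ):ℂ) := by
    intro k
    obtain ⟨m, hm⟩ := hφ k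
    have hm' : φ (k+1) = φ k + ((w k).arg + (-(Real.pi / 2 * Real.sign r)) + 2 * Real.pi * m) := by
      have : (1 + Complex.I * (r : ℂ) * Complex.exp (Complex.I * ψ) * (q : ℂ) ^ k) = w k := by
        rw [hwapp, hE]
      rw [this] at hm
      linarith [hm]
    rw [hα, hα, hm']
    rw [show Complex.I * ((φ k + ((w k).arg + (-(Real.pi / 2 * Real.sign r)) + 2 * Real.pi * m) : ℝ):ℂ)
        = Complex.I * (φ k : ℝ) + (((w k).arg : ℝ):ℂ) * Complex.I
          + Complex.I * ((-(Real.pi / 2 * Real.sign r) : ℝ):ℂ)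
          + (m:ℂ) * (2*Real.pi*Complex.I) by push_cast; ring]
    rw [Complex.exp_add, Complex.exp_add, Complex.exp_add, Complex.exp_int_mul_two_pi_mul_I,
      hsgnexp]
    rw [show (q:ℝ) ^ ((((k+1):ℤ):ℝ)/2) = q ^ ((k:ℝ)/2) * Real.sqrt q from by
      rw [Real.sqrt_eq_rpow, ← Real.rpow_add hq0]; congr 1; push_cast; ring]
    have e1 : ((‖w k‖ : ℝ):ℂ) * Complex.exp ((((w k).arg : ℝ):ℂ) * Complex.I) = w k :=
      Complex.norm_mul_exp_arg_mul_I (w k)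
    push_cast
    linear_combination (Complex.exp (Complex.I * (φ k : ℝ)) * (-(Complex.I * ((Real.sign r : ℝ):ℂ)))
      * ((q ^ ((k:ℝ)/2) : ℝ):ℂ) * ((Real.sqrt q : ℝ):ℂ)) * e1
  -- relation L1
  have habs_ne : ((|r| : ℝ):ℂ) ≠ 0 := Complex.ofReal_ne_zero.mpr (abs_ne_zero.mpr hr)
  have hwabs_ne : ∀ k : ℤ, ((‖w k‖ : ℝ):ℂ) ≠ 0 := fun k =>
    Complex.ofReal_ne_zero.mpr (norm_ne_zero_iff.mpr (hw_ne k))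
  have hqz_ne : ∀ k : ℤ, ((q:ℂ))^k ≠ 0 := fun k => zpow_ne_zero k hqC
  have L1 : ∀ k : ℤ, ((aseq k : ℝ):ℂ) * α (k+1) * (a * t * (q:ℂ)^(k-1)) = α k * w k := by
    intro k
    have h1 := αrel k
    have hq1 : ((q:ℂ))^(-k) * (q:ℂ)^(k-1) * (q:ℂ) = 1 := by
      rw [← zpow_add₀ hqC]
      rw [show (-k + (k-1)) = (-1 : ℤ) by ring]
      rw [zpow_neg_one]
      field_simp
    have hsrC : ((Real.sign r : ℝ):ℂ) * (r:ℂ) = ((|r| : ℝ):ℂ) := by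
      push_cast [← hsr]; ring
    rw [haseq' k, hat]
    push_cast
    have expand : ((|r| : ℝ):ℂ)⁻¹ * ((q:ℂ))^(-k) * ((‖w k‖ : ℝ):ℂ) * α (k+1) *
        (Complex.I * (r:ℂ) * ((Real.sqrt q : ℝ):ℂ) * (q:ℂ)^(k-1))
        = α k * w k * (((Real.sign r : ℝ):ℂ) * (r:ℂ) * ((|r| : ℝ):ℂ)⁻¹) *
          (((Real.sqrt q : ℝ):ℂ)^2 * ((q:ℂ))^(-k) * (q:ℂ)^(k-1)) := by
      linear_combination (((|r| : ℝ):ℂ)⁻¹ * ((q:ℂ))^(-k) *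
        (Complex.I * (r:ℂ) * ((Real.sqrt q : ℝ):ℂ) * (q:ℂ)^(k-1))) * h1
        - ((((|r| : ℝ):ℂ)⁻¹ * ((q:ℂ))^(-k) * (r:ℂ) * ((Real.sqrt q : ℝ):ℂ)^2 * (q:ℂ)^(k-1)
            * α k * ((Real.sign r : ℝ):ℂ)) * ((r:ℂ) * E * (q:ℂ)^k * Complex.I + 1)) * Complex.I_sq
    rw [expand, hsrC, hs2, mul_inv_cancel₀ habs_ne]
    linear_combination (α k * w k) * hq1
  -- scalar relation
  have hat2 : (a*t)^2 = -((r:ℂ)^2 * (q:ℂ)) := by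
    rw [hat]
    calc (Complex.I * (r:ℂ) * ((Real.sqrt q : ℝ):ℂ))^2
        = Complex.I^2 * (r:ℂ)^2 * ((Real.sqrt q : ℝ):ℂ)^2 := by ring
      _ = -((r:ℂ)^2 * (q:ℂ)) := by rw [Complex.I_sq, hs2]; ring
  have hSr : ∀ j : ℤ, aseq j ^ 2 * (r^2 * q) * q^(j-1) * q^j = (‖w j‖)^2 := by
    intro j
    rw [haseq' j]
    have hA1 : (q:ℝ)^(-j) = (q^j)⁻¹ := zpow_neg q j
    have hA2 : (q:ℝ)^(j-1) = q^j / q := by rw [zpow_sub₀ hq0.ne']; simp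
    rw [hA1, hA2]
    have hqj : (q:ℝ)^j ≠ 0 := zpow_ne_zero j hq0.ne'
    have habsr : |r| ≠ 0 := abs_ne_zero.mpr hr
    field_simp
    linear_combination (-(‖w j‖)^2) * _root_.sq_abs r
  have hS : ∀ j : ℤ, ((aseq j : ℝ):ℂ)^2 * (a*t)^2 * (q:ℂ)^(j-1) * (q:ℂ)^j
      = -(((‖w j‖ : ℝ):ℂ))^2 := by
    intro j
    have hc := congrArg (Complex.ofReal) (hSr j)
    push_cast at hc
    rw [hat2]
    linear_combination -hc
  have L2 : ∀ j : ℤ, ((aseq j : ℝ):ℂ) * α j * (a * t * (q:ℂ)^j) = -(α (j+1)) * (1 - t*(q:ℂ)^j) := by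
    intro j
    have hmc : w j * (starRingEnd ℂ) (w j) = (((‖w j‖ : ℝ):ℂ))^2 := by
      rw [Complex.mul_conj, Complex.normSq_eq_norm_sq]
      push_cast
      ring
    apply mul_right_cancel₀ (hw_ne j)
    rw [← hconjw j]
    linear_combination (-((aseq j : ℂ) * (a*t*(q:ℂ)^j))) * (L1 j) + (α (j+1)) * hS j + (α (j+1)) * hmc
  -- final assembly
  intro z f hrec k
  have hane : a ≠ 0 := by
    rw [ha]
    exact mul_ne_zero (Complex.ofReal_ne_zero.mpr (Real.sqrt_ne_zero'.mpr hq0)) (Complex.exp_ne_zero _)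
  have htne : t ≠ 0 := by
    rw [ht]
    exact mul_ne_zero (mul_ne_zero Complex.I_ne_zero hrC) (Complex.exp_ne_zero _)
  have hD : a * t * (q:ℂ)^(k-1) ≠ 0 := mul_ne_zero (mul_ne_zero hane htne) (hqz_ne _)
  have key := hrec k
  rw [hwk_rec k] at key
  field_simp at key
  have h1 := L1 k
  have h2 := L2 (k-1)
  rw [show (k-1)+1 = k by ring] at h2
  apply mul_right_cancel₀ hD
  linear_combination α k * key - f (k+1) * h1 - f (k-1) * h2
end

section
/- Let t ∈ ℝ with t < 0, s ∈ ℝ∖{0}, and a = is. Define a_k = (q^{1/2−k}/|st|)·√((1 − t q^k)(1 − t s² q^{k−1})) and α_k = i^k s^k √((q^{2−k}/(s²t); q)_∞ / (q^{1−k}/t; q)_∞); here 1 − tq^k > 0, 1 − ts²q^{k−1} > 0, and both infinite products under the square root are positive since t < 0. Then a_k > 0 for every k ∈ ℤ, and whenever a sequence (f_k)_{k∈ℤ} of complex numbers satisfies 2z·f_k = ((1 + a²t q^{k−1})/(a t q^{k−1}))·f_{k+1} − ((1 − t q^{k−1})/(a t q^{k−1}))·f_{k−1} for some z ∈ ℂ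 and all k ∈ ℤ, the sequence g_k = α_k f_k satisfies the symmetric recurrence 2z·g_k = a_k·g_{k+1} + a_{k−1}·g_{k−1} for all k ∈ ℤ. -/
open Complex Filter Topology

lemma qpr_mult {q x : ℝ} (hq0 : 0 < q) (hq1 : q < 1) (hx : x ≤ 0) :
    Multipliable (fun i : ℕ => 1 - x * q ^ i) := by
  have hpos : ∀ (u : Unit) (i : ℕ), 0 < 1 - x * q ^ i := fun _ i => by
    nlinarith [pow_pos hq0 i]
  have hsum : Summable (fun i : ℕ => Real.log (1 - x * q ^ i)) := by
    refine Summable.of_nonneg_of_le (fun i => Real.log_nonneg (by nlinarith [pow_pos hq0 i]))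
      (fun i => ?_) ((summable_geometric_of_lt_one hq0.le hq1).mul_left (-x))
    have := Real.log_le_sub_one_of_pos (hpos () i)
    linarith
  exact Real.multipliable_of_summable_log (hpos ()) hsum

lemma qpr_one_le {q x : ℝ} (hq0 : 0 < q) (hq1 : q < 1) (hx : x ≤ 0) : 1 ≤ qPochInfR q x := by
  refine ge_of_tendsto' (qpr_mult hq0 hq1 hx).hasProd (fun s => ?_)
  calc (1:ℝ) = ∏ _i ∈ s, 1 := by simp
  _ ≤ ∏ i ∈ s, (1 - x * q ^ i) :=
    Finset.prod_le_prod (by intros; norm_num) (fun i _ => by nlinarith [pow_pos hq0 i])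

lemma qpr_pos {q x : ℝ} (hq0 : 0 < q) (hq1 : q < 1) (hx : x ≤ 0) : 0 < qPochInfR q x :=
  lt_of_lt_of_le one_pos (qpr_one_le hq0 hq1 hx)

set_option maxHeartbeats 1000000 in
lemma qpr_shift {q x : ℝ} (hq0 : 0 < q) (hq1 : q < 1) (hx : x ≤ 0) :
    qPochInfR q x = (1 - x) * qPochInfR q (x * q) := by
  unfold qPochInfR
  have hm : Multipliable (fun n : ℕ => 1 - x * q ^ (n + 1)) :=
    (qpr_mult hq0 hq1 (mul_nonpos_of_nonpos_of_nonneg hx hq0.le)).congr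
      (fun i => by rw [pow_succ]; ring)
  rw [tprod_eq_zero_mul' hm]
  simp only [pow_zero, mul_one]
  congr 1
  exact tprod_congr fun i => by rw [pow_succ]; ring


lemma key1 (q s t w r : ℝ) (hq : 0 < q) (hw : 0 < w) (hs : s ≠ 0) (ht : t < 0)
    (hr : 0 ≤ r) (hr2 : r ^ 2 = q) :
    r * w⁻¹ / |s * t| * Real.sqrt ((1 - t * w) * (1 - t * s ^ 2 * (w / q))) *
      Real.sqrt ((1 - (q / w) / (s ^ 2 * t)) / (1 - w⁻¹ / t)) * (s ^ 2 * (-t) * (w / q))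
      = 1 - s ^ 2 * t * (w / q) := by
  have hs2 : (0:ℝ) < s ^ 2 := by positivity
  have hwq : (0:ℝ) < w / q := div_pos hw hq
  have hd1 : (0:ℝ) < 1 - t * w := by nlinarith
  have hd2 : (0:ℝ) < 1 - t * s ^ 2 * (w / q) := by nlinarith [mul_pos hs2 hwq]
  have hc1 : (0:ℝ) < 1 - (q / w) / (s ^ 2 * t) := by
    have h := div_neg_of_pos_of_neg (div_pos hq hw) (mul_neg_of_pos_of_neg hs2 ht); linarith
  have hc2 : (0:ℝ) < 1 - w⁻¹ / t := by
    have h := div_neg_of_pos_of_neg (inv_pos.mpr hw) ht; linarith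
  have hst : (0:ℝ) < |s * t| := abs_pos.mpr (mul_ne_zero hs ht.ne)
  have hLnn : 0 ≤ r * w⁻¹ / |s * t| * Real.sqrt ((1 - t * w) * (1 - t * s ^ 2 * (w / q))) *
      Real.sqrt ((1 - (q / w) / (s ^ 2 * t)) / (1 - w⁻¹ / t)) * (s ^ 2 * (-t) * (w / q)) := by
    have h1 : (0:ℝ) ≤ s ^ 2 * (-t) * (w / q) := by nlinarith [mul_pos hs2 hwq]
    have h2 : (0:ℝ) ≤ r * w⁻¹ / |s * t| := by positivity
    positivity
  have hRnn : (0:ℝ) ≤ 1 - s ^ 2 * t * (w / q) := by nlinarith [mul_pos hs2 hwq]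
  have hsq : (r * w⁻¹ / |s * t| * Real.sqrt ((1 - t * w) * (1 - t * s ^ 2 * (w / q))) *
      Real.sqrt ((1 - (q / w) / (s ^ 2 * t)) / (1 - w⁻¹ / t)) * (s ^ 2 * (-t) * (w / q))) ^ 2
      = (1 - s ^ 2 * t * (w / q)) ^ 2 := by
    have e1 : Real.sqrt ((1 - t * w) * (1 - t * s ^ 2 * (w / q))) ^ 2
        = (1 - t * w) * (1 - t * s ^ 2 * (w / q)) := Real.sq_sqrt (by positivity)
    have e2 : Real.sqrt ((1 - (q / w) / (s ^ 2 * t)) / (1 - w⁻¹ / t)) ^ 2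
        = (1 - (q / w) / (s ^ 2 * t)) / (1 - w⁻¹ / t) := Real.sq_sqrt (by positivity)
    calc (r * w⁻¹ / |s * t| * Real.sqrt ((1 - t * w) * (1 - t * s ^ 2 * (w / q))) *
      Real.sqrt ((1 - (q / w) / (s ^ 2 * t)) / (1 - w⁻¹ / t)) * (s ^ 2 * (-t) * (w / q))) ^ 2
        = r ^ 2 * (w⁻¹) ^ 2 / |s * t| ^ 2 *
            (Real.sqrt ((1 - t * w) * (1 - t * s ^ 2 * (w / q))) ^ 2) *
            (Real.sqrt ((1 - (q / w) / (s ^ 2 * t)) / (1 - w⁻¹ / t)) ^ 2) *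
            (s ^ 2 * (-t) * (w / q)) ^ 2 := by ring
      _ = (1 - s ^ 2 * t * (w / q)) ^ 2 := by
          rw [e1, e2, hr2, _root_.sq_abs]
          rw [show q * (w⁻¹) ^ 2 / (s * t) ^ 2 * ((1 - t * w) * (1 - t * s ^ 2 * (w / q))) *
              ((1 - (q / w) / (s ^ 2 * t)) / (1 - w⁻¹ / t)) * (s ^ 2 * (-t) * (w / q)) ^ 2
              = (q * (w⁻¹) ^ 2 / (s * t) ^ 2 * ((1 - t * w) * (1 - t * s ^ 2 * (w / q))) *
              (1 - (q / w) / (s ^ 2 * t)) * (s ^ 2 * (-t) * (w / q)) ^ 2) / (1 - w⁻¹ / t)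
              from by ring, div_eq_iff hc2.ne']
          field_simp [hq.ne', hw.ne', hs, ht.ne]
          ring
  calc r * w⁻¹ / |s * t| * Real.sqrt ((1 - t * w) * (1 - t * s ^ 2 * (w / q))) *
      Real.sqrt ((1 - (q / w) / (s ^ 2 * t)) / (1 - w⁻¹ / t)) * (s ^ 2 * (-t) * (w / q))
      = Real.sqrt ((r * w⁻¹ / |s * t| * Real.sqrt ((1 - t * w) * (1 - t * s ^ 2 * (w / q))) *
      Real.sqrt ((1 - (q / w) / (s ^ 2 * t)) / (1 - w⁻¹ / t)) * (s ^ 2 * (-t) * (w / q))) ^ 2) :=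
        (Real.sqrt_sq hLnn).symm
    _ = Real.sqrt ((1 - s ^ 2 * t * (w / q)) ^ 2) := by rw [hsq]
    _ = 1 - s ^ 2 * t * (w / q) := Real.sqrt_sq hRnn

lemma key2 (q s t w r : ℝ) (hq : 0 < q) (hw : 0 < w) (hs : s ≠ 0) (ht : t < 0)
    (hr : 0 ≤ r) (hr2 : r ^ 2 = q) :
    r * (w / q)⁻¹ / |s * t| * Real.sqrt ((1 - t * (w / q)) * (1 - t * s ^ 2 * (w / q ^ 2))) *
      Real.sqrt ((1 - (q / w) / t) / (1 - (q ^ 2 / w) / (s ^ 2 * t))) * (-t)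
      = q / w - t := by
  have hs2 : (0:ℝ) < s ^ 2 := by positivity
  have hwq : (0:ℝ) < w / q := div_pos hw hq
  have hwq2 : (0:ℝ) < w / q ^ 2 := by positivity
  have hd1 : (0:ℝ) < 1 - t * (w / q) := by nlinarith
  have hd2 : (0:ℝ) < 1 - t * s ^ 2 * (w / q ^ 2) := by nlinarith [mul_pos hs2 hwq2]
  have hc1 : (0:ℝ) < 1 - (q ^ 2 / w) / (s ^ 2 * t) := by
    have h := div_neg_of_pos_of_neg (div_pos (show (0:ℝ) < q ^ 2 by positivity) hw)
      (mul_neg_of_pos_of_neg hs2 ht)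
    linarith
  have hc2 : (0:ℝ) < 1 - (q / w) / t := by
    have h := div_neg_of_pos_of_neg (div_pos hq hw) ht; linarith
  have hst : (0:ℝ) < |s * t| := abs_pos.mpr (mul_ne_zero hs ht.ne)
  have hLnn : 0 ≤ r * (w / q)⁻¹ / |s * t| *
      Real.sqrt ((1 - t * (w / q)) * (1 - t * s ^ 2 * (w / q ^ 2))) *
      Real.sqrt ((1 - (q / w) / t) / (1 - (q ^ 2 / w) / (s ^ 2 * t))) * (-t) := by
    have h1 : (0:ℝ) ≤ -t := by linarith
    positivity
  have hRnn : (0:ℝ) ≤ q / w - t := by have := div_pos hq hw; linarith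
  have hsq : (r * (w / q)⁻¹ / |s * t| *
      Real.sqrt ((1 - t * (w / q)) * (1 - t * s ^ 2 * (w / q ^ 2))) *
      Real.sqrt ((1 - (q / w) / t) / (1 - (q ^ 2 / w) / (s ^ 2 * t))) * (-t)) ^ 2
      = (q / w - t) ^ 2 := by
    have e1 : Real.sqrt ((1 - t * (w / q)) * (1 - t * s ^ 2 * (w / q ^ 2))) ^ 2
        = (1 - t * (w / q)) * (1 - t * s ^ 2 * (w / q ^ 2)) := Real.sq_sqrt (by positivity)
    have e2 : Real.sqrt ((1 - (q / w) / t) / (1 - (q ^ 2 / w) / (s ^ 2 * t))) ^ 2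
        = (1 - (q / w) / t) / (1 - (q ^ 2 / w) / (s ^ 2 * t)) := Real.sq_sqrt (by positivity)
    calc (r * (w / q)⁻¹ / |s * t| *
      Real.sqrt ((1 - t * (w / q)) * (1 - t * s ^ 2 * (w / q ^ 2))) *
      Real.sqrt ((1 - (q / w) / t) / (1 - (q ^ 2 / w) / (s ^ 2 * t))) * (-t)) ^ 2
        = r ^ 2 * ((w / q)⁻¹) ^ 2 / |s * t| ^ 2 *
            (Real.sqrt ((1 - t * (w / q)) * (1 - t * s ^ 2 * (w / q ^ 2))) ^ 2) *
            (Real.sqrt ((1 - (q / w) / t) / (1 - (q ^ 2 / w) / (s ^ 2 * t))) ^ 2) *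
            (-t) ^ 2 := by ring
      _ = (q / w - t) ^ 2 := by
          rw [e1, e2, hr2, _root_.sq_abs]
          rw [show q * ((w / q)⁻¹) ^ 2 / (s * t) ^ 2 *
              ((1 - t * (w / q)) * (1 - t * s ^ 2 * (w / q ^ 2))) *
              ((1 - (q / w) / t) / (1 - (q ^ 2 / w) / (s ^ 2 * t))) * (-t) ^ 2
              = (q * ((w / q)⁻¹) ^ 2 / (s * t) ^ 2 *
              ((1 - t * (w / q)) * (1 - t * s ^ 2 * (w / q ^ 2))) *
              (1 - (q / w) / t) * (-t) ^ 2) / (1 - (q ^ 2 / w) / (s ^ 2 * t))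
              from by ring, div_eq_iff hc1.ne']
          field_simp [hq.ne', hw.ne', hs, ht.ne]
          ring
  calc r * (w / q)⁻¹ / |s * t| *
      Real.sqrt ((1 - t * (w / q)) * (1 - t * s ^ 2 * (w / q ^ 2))) *
      Real.sqrt ((1 - (q / w) / t) / (1 - (q ^ 2 / w) / (s ^ 2 * t))) * (-t)
      = Real.sqrt ((r * (w / q)⁻¹ / |s * t| *
      Real.sqrt ((1 - t * (w / q)) * (1 - t * s ^ 2 * (w / q ^ 2))) *
      Real.sqrt ((1 - (q / w) / t) / (1 - (q ^ 2 / w) / (s ^ 2 * t))) * (-t)) ^ 2) :=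
        (Real.sqrt_sq hLnn).symm
    _ = Real.sqrt ((q / w - t) ^ 2) := by rw [hsq]
    _ = q / w - t := Real.sqrt_sq hRnn


lemma scal1 (s t u v : ℂ) (hs : s ≠ 0) (ht : t ≠ 0) (hu : u ≠ 0)
    (hv : v * (s ^ 2 * (-t) * u) = 1 - s ^ 2 * t * u) :
    v * (Complex.I * s) = (1 + (Complex.I * s) ^ 2 * t * u) / (Complex.I * s * t * u) := by
  rw [eq_div_iff (by simp [hs, ht, hu, Complex.I_ne_zero])]
  linear_combination (-(Complex.I ^ 2)) * hv + (-1 : ℂ) * Complex.I_sq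

lemma scal2 (s t u u' v : ℂ) (hs : s ≠ 0) (ht : t ≠ 0) (hu : u ≠ 0)
    (huu : u * u' = 1) (hv : v * (-t) = u' - t) :
    v * Complex.I⁻¹ * s⁻¹ = -((1 - t * u) / (Complex.I * s * t * u)) := by
  rw [Complex.inv_I]
  field_simp
  linear_combination (-(v * t * u)) * Complex.I_sq + (-u) * hv + (-1 : ℂ) * huu

theorem stmt7
    (q : ℝ) (hq0 : 0 < q) (hq1 : q < 1)
    (t s : ℝ) (ht : t < 0) (hs : s ≠ 0)
    (a : ℂ) (ha : a = Complex.I * (s : ℂ))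
    (aseq : ℤ → ℝ)
    (haseq : ∀ k : ℤ, aseq k =
      (q ^ ((1 : ℝ) / 2 - (k : ℝ)) / |s * t|) *
        Real.sqrt ((1 - t * q ^ k) * (1 - t * s ^ 2 * q ^ (k - 1))))
    (α : ℤ → ℂ)
    (hα : ∀ k : ℤ, α k = Complex.I ^ k * (s : ℂ) ^ k *
      ((Real.sqrt (qPochInfR q (q ^ (2 - k) / (s ^ 2 * t)) / qPochInfR q (q ^ (1 - k) / t)) : ℝ) : ℂ))
    :
    (∀ k : ℤ, 0 < aseq k) ∧
    ∀ (z : ℂ) (f : ℤ → ℂ),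
      (∀ k : ℤ, 2 * z * f k =
          ((1 + a ^ 2 * (t : ℂ) * (q : ℂ) ^ (k - 1)) / (a * (t : ℂ) * (q : ℂ) ^ (k - 1))) * f (k + 1) -
          ((1 - (t : ℂ) * (q : ℂ) ^ (k - 1)) / (a * (t : ℂ) * (q : ℂ) ^ (k - 1))) * f (k - 1)) →
      ∀ k : ℤ, 2 * z * (α k * f k) =
        (aseq k : ℂ) * (α (k + 1) * f (k + 1)) + (aseq (k - 1) : ℂ) * (α (k - 1) * f (k - 1)) := by
  have hqne : q ≠ 0 := hq0.ne'
  have htne : t ≠ 0 := ht.ne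
  have hs2 : (0:ℝ) < s ^ 2 := by positivity
  have hs2t : s ^ 2 * t < 0 := mul_neg_of_pos_of_neg hs2 ht
  have hX : ∀ m : ℤ, q ^ m / (s ^ 2 * t) ≤ 0 := fun m =>
    div_nonpos_of_nonneg_of_nonpos (zpow_pos hq0 m).le hs2t.le
  have hY : ∀ m : ℤ, q ^ m / t ≤ 0 := fun m =>
    div_nonpos_of_nonneg_of_nonpos (zpow_pos hq0 m).le ht.le
  have hd1 : ∀ m : ℤ, (0:ℝ) < 1 - t * q ^ m := fun m => by nlinarith [zpow_pos hq0 m]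
  have hd2 : ∀ m : ℤ, (0:ℝ) < 1 - t * s ^ 2 * q ^ m := fun m => by
    nlinarith [mul_pos hs2 (zpow_pos hq0 m)]
  have haspos : ∀ k : ℤ, 0 < aseq k := by
    intro k
    rw [haseq k]
    apply mul_pos
    · exact div_pos (Real.rpow_pos_of_pos hq0 _) (abs_pos.mpr (mul_ne_zero hs htne))
    · exact Real.sqrt_pos.mpr (mul_pos (hd1 k) (hd2 (k-1)))
  refine ⟨haspos, ?_⟩
  intro z f hf k
  have hw : (0:ℝ) < q ^ (k:ℤ) := zpow_pos hq0 k
  have hk1 : (q:ℝ) ^ (k-1:ℤ) = q ^ (k:ℤ) / q := by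
    rw [zpow_sub_one₀ hqne, div_eq_mul_inv]
  have hk2 : (q:ℝ) ^ (1-k:ℤ) = q / q ^ (k:ℤ) := by
    rw [zpow_sub₀ hqne, zpow_one]
  have hk3 : (q:ℝ) ^ (-k:ℤ) = (q ^ (k:ℤ))⁻¹ := zpow_neg q k
  have hk4 : (q:ℝ) ^ (2-k:ℤ) = q ^ 2 / q ^ (k:ℤ) := by
    rw [zpow_sub₀ hqne]; norm_cast
  have hsqq : Real.sqrt q ^ 2 = q := Real.sq_sqrt hq0.le
  have hrp : ∀ m : ℤ, q ^ ((1:ℝ)/2 - (m:ℝ)) = Real.sqrt q * (q ^ (m:ℤ))⁻¹ := by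
    intro m
    rw [Real.rpow_sub hq0, Real.rpow_intCast, ← Real.sqrt_eq_rpow, div_eq_mul_inv]
  have hshX : ∀ m : ℤ, qPochInfR q (q ^ m / (s ^ 2 * t))
      = (1 - q ^ m / (s ^ 2 * t)) * qPochInfR q (q ^ (m+1) / (s ^ 2 * t)) := by
    intro m
    have h := qpr_shift hq0 hq1 (hX m)
    rwa [div_mul_eq_mul_div, ← zpow_add_one₀ hqne] at h
  have hshY : ∀ m : ℤ, qPochInfR q (q ^ m / t)
      = (1 - q ^ m / t) * qPochInfR q (q ^ (m+1) / t) := by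
    intro m
    have h := qpr_shift hq0 hq1 (hY m)
    rwa [div_mul_eq_mul_div, ← zpow_add_one₀ hqne] at h
  have hc1 : (0:ℝ) < 1 - q ^ (1-k:ℤ) / (s ^ 2 * t) := by have := hX (1-k); linarith
  have hc2 : (0:ℝ) < 1 - q ^ (-k:ℤ) / t := by have := hY (-k); linarith
  have hc1' : (0:ℝ) < 1 - q ^ (2-k:ℤ) / (s ^ 2 * t) := by have := hX (2-k); linarith
  have hc2' : (0:ℝ) < 1 - q ^ (1-k:ℤ) / t := by have := hY (1-k); linarith
  have hApos : 0 < qPochInfR q (q ^ (2-k:ℤ) / (s ^ 2 * t)) := qpr_pos hq0 hq1 (hX _)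
  have hBpos : 0 < qPochInfR q (q ^ (1-k:ℤ) / t) := qpr_pos hq0 hq1 (hY _)
  have hA'pos : 0 < qPochInfR q (q ^ (2-(k-1):ℤ) / (s ^ 2 * t)) := qpr_pos hq0 hq1 (hX _)
  have hB'pos : 0 < qPochInfR q (q ^ (1-(k-1):ℤ) / t) := qpr_pos hq0 hq1 (hY _)
  have hA1 : qPochInfR q (q ^ (2-(k+1):ℤ) / (s ^ 2 * t))
      = (1 - q ^ (1-k:ℤ) / (s ^ 2 * t)) * qPochInfR q (q ^ (2-k:ℤ) / (s ^ 2 * t)) := by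
    have h := hshX (1-k)
    rw [show (1-k+1:ℤ) = 2-k from by ring] at h
    rw [show (2-(k+1):ℤ) = 1-k from by ring]
    exact h
  have hB1 : qPochInfR q (q ^ (1-(k+1):ℤ) / t)
      = (1 - q ^ (-k:ℤ) / t) * qPochInfR q (q ^ (1-k:ℤ) / t) := by
    have h := hshY (-k)
    rw [show (-k+1:ℤ) = 1-k from by ring] at h
    rw [show (1-(k+1):ℤ) = -k from by ring]
    exact h
  have hA2 : qPochInfR q (q ^ (2-k:ℤ) / (s ^ 2 * t))
      = (1 - q ^ (2-k:ℤ) / (s ^ 2 * t)) * qPochInfR q (q ^ (2-(k-1):ℤ) / (s ^ 2 * t)) := by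
    have h := hshX (2-k)
    rwa [show (2-k+1:ℤ) = 2-(k-1) from by ring] at h
  have hB2 : qPochInfR q (q ^ (1-k:ℤ) / t)
      = (1 - q ^ (1-k:ℤ) / t) * qPochInfR q (q ^ (1-(k-1):ℤ) / t) := by
    have h := hshY (1-k)
    rwa [show (1-k+1:ℤ) = 1-(k-1) from by ring] at h
  have S1 : Real.sqrt (qPochInfR q (q ^ (2-(k+1):ℤ) / (s ^ 2 * t)) /
        qPochInfR q (q ^ (1-(k+1):ℤ) / t))
      = Real.sqrt ((1 - q ^ (1-k:ℤ) / (s ^ 2 * t)) / (1 - q ^ (-k:ℤ) / t)) *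
        Real.sqrt (qPochInfR q (q ^ (2-k:ℤ) / (s ^ 2 * t)) / qPochInfR q (q ^ (1-k:ℤ) / t)) := by
    rw [hA1, hB1, mul_div_mul_comm, Real.sqrt_mul (div_nonneg hc1.le hc2.le)]
  have S2 : Real.sqrt (qPochInfR q (q ^ (2-(k-1):ℤ) / (s ^ 2 * t)) /
        qPochInfR q (q ^ (1-(k-1):ℤ) / t))
      = Real.sqrt ((1 - q ^ (1-k:ℤ) / t) / (1 - q ^ (2-k:ℤ) / (s ^ 2 * t))) *
        Real.sqrt (qPochInfR q (q ^ (2-k:ℤ) / (s ^ 2 * t)) / qPochInfR q (q ^ (1-k:ℤ) / t)) := by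
    rw [← Real.sqrt_mul (div_nonneg hc2'.le hc1'.le)]
    congr 1
    have hone : (1 - q ^ ((1:ℤ)-k) / t) / (1 - q ^ ((2:ℤ)-k) / (s ^ 2 * t)) *
        ((1 - q ^ ((2:ℤ)-k) / (s ^ 2 * t)) / (1 - q ^ ((1:ℤ)-k) / t)) = 1 := by
      rw [div_mul_div_comm, mul_comm]
      exact div_self (mul_ne_zero hc1'.ne' hc2'.ne')
    rw [hA2, hB2, mul_div_mul_comm, ← mul_assoc, hone, one_mul]
  have k1 : aseq k * Real.sqrt ((1 - q ^ (1-k:ℤ) / (s ^ 2 * t)) / (1 - q ^ (-k:ℤ) / t)) *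
      (s ^ 2 * (-t) * q ^ (k-1:ℤ)) = 1 - s ^ 2 * t * q ^ (k-1:ℤ) := by
    rw [haseq k, hrp k, hk1, hk2, hk3]
    exact key1 q s t (q ^ (k:ℤ)) (Real.sqrt q) hq0 hw hs ht (Real.sqrt_nonneg q) hsqq
  have k2 : aseq (k-1) * Real.sqrt ((1 - q ^ (1-k:ℤ) / t) / (1 - q ^ (2-k:ℤ) / (s ^ 2 * t))) *
      (-t) = q ^ (1-k:ℤ) - t := by
    rw [haseq (k-1), hrp (k-1), hk1, hk2, hk4, show (k-1-1:ℤ) = k-2 from by ring,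
        show (q:ℝ) ^ (k-2:ℤ) = q ^ (k:ℤ) / q ^ 2 from by rw [zpow_sub₀ hqne]; norm_cast]
    exact key2 q s t (q ^ (k:ℤ)) (Real.sqrt q) hq0 hw hs ht (Real.sqrt_nonneg q) hsqq
  have hsC : (s:ℂ) ≠ 0 := Complex.ofReal_ne_zero.mpr hs
  have htC : (t:ℂ) ≠ 0 := Complex.ofReal_ne_zero.mpr htne
  have hqC : (q:ℂ) ≠ 0 := Complex.ofReal_ne_zero.mpr hqne
  have hQne : (q:ℂ) ^ (k-1:ℤ) ≠ 0 := zpow_ne_zero _ hqC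
  have hQQ : (q:ℂ) ^ (k-1:ℤ) * (q:ℂ) ^ (1-k:ℤ) = 1 := by
    rw [← zpow_add₀ hqC, show (k-1+(1-k):ℤ) = 0 from by ring, zpow_zero]
  have k1C : (aseq k : ℂ) *
      ((Real.sqrt ((1 - q ^ (1-k:ℤ) / (s ^ 2 * t)) / (1 - q ^ (-k:ℤ) / t)) : ℝ) : ℂ) *
      ((s:ℂ) ^ 2 * (-(t:ℂ)) * (q:ℂ) ^ (k-1:ℤ)) = 1 - (s:ℂ) ^ 2 * (t:ℂ) * (q:ℂ) ^ (k-1:ℤ) := by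
    exact_mod_cast congrArg (fun x : ℝ => (x:ℂ)) k1
  have k2C : (aseq (k-1) : ℂ) *
      ((Real.sqrt ((1 - q ^ (1-k:ℤ) / t) / (1 - q ^ (2-k:ℤ) / (s ^ 2 * t))) : ℝ) : ℂ) *
      (-(t:ℂ)) = (q:ℂ) ^ (1-k:ℤ) - (t:ℂ) := by
    exact_mod_cast congrArg (fun x : ℝ => (x:ℂ)) k2
  have hsc1 := scal1 (s:ℂ) (t:ℂ) ((q:ℂ) ^ (k-1:ℤ))
    ((aseq k : ℂ) * ((Real.sqrt ((1 - q ^ (1-k:ℤ) / (s ^ 2 * t)) / (1 - q ^ (-k:ℤ) / t)) : ℝ) : ℂ))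
    hsC htC hQne k1C
  have hsc2 := scal2 (s:ℂ) (t:ℂ) ((q:ℂ) ^ (k-1:ℤ)) ((q:ℂ) ^ (1-k:ℤ))
    ((aseq (k-1) : ℂ) *
      ((Real.sqrt ((1 - q ^ (1-k:ℤ) / t) / (1 - q ^ (2-k:ℤ) / (s ^ 2 * t))) : ℝ) : ℂ))
    hsC htC hQne hQQ k2C
  have L1 : (aseq k : ℂ) * α (k+1)
      = α k * ((1 + a ^ 2 * (t:ℂ) * (q:ℂ) ^ (k-1:ℤ)) / (a * (t:ℂ) * (q:ℂ) ^ (k-1:ℤ))) := by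
    rw [hα (k+1), hα k, ha, S1]
    push_cast
    rw [zpow_add_one₀ Complex.I_ne_zero, zpow_add_one₀ hsC]
    linear_combination (Complex.I ^ (k:ℤ) * (s:ℂ) ^ (k:ℤ) *
      ((Real.sqrt (qPochInfR q (q ^ (2-k:ℤ) / (s ^ 2 * t)) /
        qPochInfR q (q ^ (1-k:ℤ) / t)) : ℝ) : ℂ)) * hsc1
  have L2 : (aseq (k-1) : ℂ) * α (k-1)
      = -(α k * ((1 - (t:ℂ) * (q:ℂ) ^ (k-1:ℤ)) / (a * (t:ℂ) * (q:ℂ) ^ (k-1:ℤ)))) := by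
    rw [hα (k-1), hα k, ha, S2]
    push_cast
    rw [zpow_sub_one₀ Complex.I_ne_zero, zpow_sub_one₀ hsC]
    linear_combination (Complex.I ^ (k:ℤ) * (s:ℂ) ^ (k:ℤ) *
      ((Real.sqrt (qPochInfR q (q ^ (2-k:ℤ) / (s ^ 2 * t)) /
        qPochInfR q (q ^ (1-k:ℤ) / t)) : ℝ) : ℂ)) * hsc2
  linear_combination (-(f (k+1))) * L1 + (-(f (k-1))) * L2 + α k * hf k
end

section
/- Let ψ ∈ ℝ, r ∈ ℝ∖{0}, a = q^{1/2} e^{iψ}, t = i r e^{−iψ}, and assume t ∉ ℝ_{>0}. Then for every y ∈ ℂ∖{0} with y² ∉ q^ℤ one has conj(c(conj(y); a, t)) = (θ(t)/θ(conj(t)))·c(y; −a, t), where c(y;a,t) = (a/y, −q/(ay), ayt, q/(ayt); q)_∞ / (−q, y^{−2}, t, q/t; q)_∞ and conj denotes complex conjugation. -/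
open Complex Filter Topology

lemma star_tprod' (f : ℕ → ℂ) : star (∏' i, f i) = ∏' i, star (f i) := by
  by_cases h : Multipliable f
  · exact h.map_tprod (starRingEnd ℂ) continuous_star
  · have h2 : ¬ Multipliable (fun i => star (f i)) := by
      intro h2
      apply h
      have := h2.map (starRingEnd ℂ) continuous_star
      simpa [Function.comp_def] using this
    rw [tprod_eq_one_of_not_multipliable h, tprod_eq_one_of_not_multipliable h2, star_one]

lemma star_qPochInf' (q : ℝ) (a : ℂ) : star (qPochInf q a) = qPochInf q (star a) := by
  rw [qPochInf, star_tprod']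
  simp only [qPochInf, star_sub, star_one, star_mul', star_pow, Complex.star_def,
    Complex.conj_ofReal]

lemma alg2 (X1 X2 X3 X4 A1 A2 T1 T2 S1 S2 : ℂ)
    (h : T1 * T2 = 0 → S1 * S2 = 0) :
    (X2 * X1 * X3 * X4) / (A1 * A2 * S1 * S2) =
      T1 * T2 / (S1 * S2) * (X1 * X2 * X3 * X4 / (A1 * A2 * T1 * T2)) := by
  by_cases hθ : T1 * T2 = 0
  · rcases mul_eq_zero.mp (h hθ) with h' | h' <;>
      rcases mul_eq_zero.mp hθ with h'' | h'' <;> simp [h', h'']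
  · rw [div_mul_div_comm,
      show S1 * S2 * (A1 * A2 * T1 * T2) = (T1 * T2) * (A1 * A2 * S1 * S2) by ring,
      show T1 * T2 * (X1 * X2 * X3 * X4) = (T1 * T2) * (X2 * X1 * X3 * X4) by ring,
      mul_div_mul_left _ _ hθ]

theorem stmt8
    (q : ℝ) (hq0 : 0 < q) (hq1 : q < 1)
    (ψ r : ℝ) (hr : r ≠ 0)
    (a t : ℂ)
    (ha : a = (Real.sqrt q : ℂ) * Complex.exp (Complex.I * ψ))
    (ht : t = Complex.I * (r : ℂ) * Complex.exp (-(Complex.I * ψ)))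
    (htpos : ∀ x : ℝ, 0 < x → t ≠ (x : ℂ))
    (y : ℂ) (hy : y ≠ 0) (hy2 : ∀ m : ℤ, y ^ 2 ≠ (q : ℂ) ^ m) :
    star (cfun q a t (star y)) = (jtheta q t / jtheta q (star t)) * cfun q (-a) t y := by
  have hqc : (q : ℂ) ≠ 0 := by exact_mod_cast hq0.ne'
  have hsq : ((Real.sqrt q : ℝ) : ℂ) ≠ 0 := by
    exact_mod_cast (Real.sqrt_pos.mpr hq0).ne'
  have ha0 : a ≠ 0 := by
    rw [ha]; exact mul_ne_zero hsq (Complex.exp_ne_zero _)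
  have hs2 : ((Real.sqrt q : ℝ) : ℂ) ^ 2 = (q : ℂ) := by
    rw [← Complex.ofReal_pow, Real.sq_sqrt hq0.le]
  have hEF : Complex.exp (Complex.I * ψ) * Complex.exp (-(Complex.I * ψ)) = 1 := by
    rw [← Complex.exp_add, add_neg_cancel, Complex.exp_zero]
  have hE : star (Complex.exp (Complex.I * ψ)) = Complex.exp (-(Complex.I * ψ)) := by
    simp only [Complex.star_def, ← Complex.exp_conj]
    congr 1
    simp [Complex.conj_ofReal, Complex.conj_I]
  have hE2 : star (Complex.exp (-(Complex.I * ψ))) = Complex.exp (Complex.I * ψ) := by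
    simp only [Complex.star_def, ← Complex.exp_conj]
    congr 1
    simp [Complex.conj_ofReal, Complex.conj_I]
  have hsa : star a = (q : ℂ) / a := by
    rw [eq_div_iff ha0, ha, star_mul', hE]
    simp only [Complex.star_def, Complex.conj_ofReal]
    linear_combination (((Real.sqrt q : ℝ) : ℂ) ^ 2) * hEF + hs2
  have hst : star t = -(a ^ 2 * t) / q := by
    rw [eq_div_iff hqc, ht, ha, star_mul', star_mul', hE2]
    simp only [Complex.star_def, Complex.conj_ofReal, Complex.conj_I]
    linear_combination
      (Complex.I * (r : ℂ) * ((Real.sqrt q : ℝ) : ℂ) ^ 2 * Complex.exp (Complex.I * ψ)) * hEF +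
        (Complex.I * (r : ℂ) * Complex.exp (Complex.I * ψ)) * hs2
  have key : star (cfun q a t (star y)) = cfun q (star a) (star t) y := by
    simp only [cfun, star_div₀, star_mul', star_qPochInf', star_neg, star_inv₀, star_pow,
      star_star]
    rw [show star ((q : ℂ)) = (q : ℂ) from by
      simp [Complex.star_def, Complex.conj_ofReal]]
  rw [key, hsa, hst]
  have e1 : (q : ℂ) / a / y = -(q : ℂ) / (-a * y) := by
    field_simp
  have e2 : -(q : ℂ) / ((q : ℂ) / a * y) = -a / y := by
    field_simp
  have e3 : (q : ℂ) / a * y * (-(a ^ 2 * t) / q) = -a * y * t := by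
    field_simp
  simp only [cfun, jtheta]
  rw [e1, e2, e3]
  apply alg2
  intro h0
  have hσ : qPochInf (q : ℂ) (-(a ^ 2 * t) / q) * qPochInf (q : ℂ) ((q : ℂ) / (-(a ^ 2 * t) / q)) =
      star (qPochInf (q : ℂ) t * qPochInf (q : ℂ) ((q : ℂ) / t)) := by
    rw [star_mul', star_qPochInf', star_qPochInf', star_div₀, hst,
      show star ((q : ℂ)) = (q : ℂ) from by simp [Complex.star_def, Complex.conj_ofReal]]
  rw [hσ, h0, star_zero]
end

section
/- Let ψ ∈ ℝ, r ∈ ℝ∖{0}, a = q^{1/2} e^{iψ}, t = i r e^{−iψ} with t ∉ ℝ_{>0}, and let a_k = |r|^{−1} q^{−k} √(1 − 2 r q^k sin ψ + r² q^{2k}) (so a_k > 0 for all k ∈ ℤ). Let ε ∈ {1, −1}. If ξ : ℤ → ℂ satisfies 2ε·ξ_k = a_k ξ_{k+1} + a_{k−1} ξ_{k−1} for all k ∈ ℤ and Σ_{k∈ℤ} |ξ_k|² < ∞, then ξ = 0. (Hence ±1 are never eigenvalues of a self-adjoint extension of the associated Jacobi operator on ℓ²(ℤ), so the endpoints ±1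 belong to the continuous spectrum.) -/
open Complex Filter Topology

set_option maxHeartbeats 1000000

private lemma geom_tail_le {q : ℝ} (hq0 : 0 ≤ q) (hq1 : q < 1) (m L : ℕ) :
    ∑ i ∈ Finset.range L, q ^ (m + i) ≤ q ^ m / (1 - q) := by
  have h1q : 0 < 1 - q := by linarith
  have heq : ∑ i ∈ Finset.range L, q ^ (m + i) = q ^ m * ∑ i ∈ Finset.range L, q ^ i := by
    rw [Finset.mul_sum]; exact Finset.sum_congr rfl fun i _ => pow_add q m i
  rw [heq]
  have hsum : ∑ i ∈ Finset.range L, q ^ i ≤ 1 / (1 - q) := by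
    rw [geom_sum_eq (by linarith : q ≠ 1)]
    have hL : 0 ≤ q ^ L := pow_nonneg hq0 L
    have heq2 : (q ^ L - 1) / (q - 1) = (1 - q ^ L) / (1 - q) := by
      rw [← neg_sub (1:ℝ) q, ← neg_sub (1:ℝ) (q ^ L), neg_div_neg_eq]
    rw [heq2]
    gcongr
    linarith
  calc q ^ m * ∑ i ∈ Finset.range L, q ^ i ≤ q ^ m * (1 / (1 - q)) :=
        mul_le_mul_of_nonneg_left hsum (pow_nonneg hq0 m)
    _ = q ^ m / (1 - q) := by ring

private lemma core_lemma {q C : ℝ} (hq0 : 0 < q) (hq1 : q < 1) (hC : 0 ≤ C)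
    (b : ℕ → ℝ) (x : ℕ → ℂ)
    (hb2 : ∀ n, (1:ℝ)/2 ≤ b n) (hb : ∀ n, |b n - 1| ≤ C * q ^ n)
    (hrec : ∀ n : ℕ, 2 * x (n+1) = (b n : ℂ) * x n + (b (n+1) : ℂ) * x (n+2))
    (hx : Tendsto x atTop (𝓝 0)) :
    ∃ N : ℕ, ∀ m, N ≤ m → x m = 0 := by
  have h1q : 0 < 1 - q := by linarith
  set w : ℕ → ℂ := fun n => (b n : ℂ) * x (n+1) - x n with hw
  have hstep : ∀ n, w (n+1) - w n = ((1:ℂ) - (b n : ℂ)) * (x (n+1) + x n) := by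
    intro n
    simp only [hw]
    linear_combination -hrec n
  -- w tends to 0
  have hbabs : ∀ n, |b n| ≤ 1 + C := by
    intro n
    have h1 := hb n
    have h2 : q ^ n ≤ 1 := pow_le_one₀ hq0.le hq1.le
    have := abs_le.mp h1
    have hqn : 0 ≤ q ^ n := pow_nonneg hq0.le n
    rw [abs_le]; constructor <;> nlinarith
  have hxn : Tendsto (fun n => ‖x n‖) atTop (𝓝 0) := by
    simpa using hx.norm
  have hw0 : Tendsto w atTop (𝓝 0) := by
    rw [tendsto_zero_iff_norm_tendsto_zero]
    apply squeeze_zero (fun n => norm_nonneg _)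
      (g := fun n => (1 + C) * ‖x (n+1)‖ + ‖x n‖)
    · intro n
      calc ‖w n‖ ≤ ‖(b n : ℂ) * x (n+1)‖ + ‖x n‖ := norm_sub_le _ _
        _ = |b n| * ‖x (n+1)‖ + ‖x n‖ := by rw [norm_mul, Complex.norm_real, Real.norm_eq_abs]
        _ ≤ (1 + C) * ‖x (n+1)‖ + ‖x n‖ := by
            have := hbabs n
            have := norm_nonneg (x (n+1))
            nlinarith
    · have h1 : Tendsto (fun n => ‖x (n+1)‖) atTop (𝓝 0) :=
        hxn.comp (tendsto_add_atTop_nat 1)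
      have := (h1.const_mul (1 + C)).add hxn
      simpa using this
  -- constants
  set C1 : ℝ := 2 * C / (1 - q) with hC1
  set C2 : ℝ := 2 * (C1 + C) with hC2
  set C3 : ℝ := C2 / (1 - q) with hC3
  have hC1n : 0 ≤ C1 := by positivity
  have hC2n : 0 ≤ C2 := by positivity
  have hC3n : 0 ≤ C3 := by positivity
  -- key estimate
  have hkey : ∀ δ : ℝ, 0 ≤ δ → ∀ N : ℕ, (∀ m, N ≤ m → ‖x m‖ ≤ δ) →
      ∀ m, N ≤ m → ‖x m‖ ≤ C3 * δ * q ^ m := by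
    intro δ hδ N hδb
    -- bound on w
    have wb : ∀ m, N ≤ m → ‖w m‖ ≤ C1 * δ * q ^ m := by
      intro m hm
      have htel : ∀ L : ℕ, ‖w m‖ ≤ ‖w (m + L)‖ + C1 * δ * q ^ m := by
        intro L
        have hsum0 : ∑ i ∈ Finset.range L, (w (m + i + 1) - w (m + i)) = w (m + L) - w m := by
          have := Finset.sum_range_sub (fun i => w (m + i)) L
          simpa [← Nat.add_assoc] using this
        have h1 : ‖w m‖ ≤ ‖w (m + L)‖ + ‖∑ i ∈ Finset.range L, (w (m + i + 1) - w (m + i))‖ := by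
          rw [hsum0]
          calc ‖w m‖ = ‖w (m + L) - (w (m + L) - w m)‖ := by rw [sub_sub_cancel]
            _ ≤ ‖w (m + L)‖ + ‖w (m + L) - w m‖ := norm_sub_le _ _
        refine h1.trans ?_
        gcongr
        calc ‖∑ i ∈ Finset.range L, (w (m + i + 1) - w (m + i))‖
            ≤ ∑ i ∈ Finset.range L, ‖w (m + i + 1) - w (m + i)‖ := norm_sum_le _ _
          _ ≤ ∑ i ∈ Finset.range L, 2 * C * δ * q ^ (m + i) := by
              apply Finset.sum_le_sum
              intro i _
              rw [hstep (m + i)]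
              rw [norm_mul]
              have e1 : ‖(1:ℂ) - (b (m+i) : ℂ)‖ ≤ C * q ^ (m + i) := by
                have : ((1:ℂ) - (b (m+i) : ℂ)) = ((1 - b (m+i) : ℝ) : ℂ) := by push_cast; ring
                rw [this, Complex.norm_real, Real.norm_eq_abs, abs_sub_comm]
                exact hb (m+i)
              have e2 : ‖x (m+i+1) + x (m+i)‖ ≤ 2 * δ := by
                calc ‖x (m+i+1) + x (m+i)‖ ≤ ‖x (m+i+1)‖ + ‖x (m+i)‖ := norm_add_le _ _
                  _ ≤ δ + δ := add_le_add (hδb _ (by omega)) (hδb _ (by omega))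
                  _ = 2 * δ := by ring
              have h3 : (0:ℝ) ≤ ‖x (m+i+1) + x (m+i)‖ := norm_nonneg _
              have h4 : (0:ℝ) ≤ ‖(1:ℂ) - (b (m+i) : ℂ)‖ := norm_nonneg _
              nlinarith [pow_nonneg hq0.le (m+i)]
          _ = 2 * C * δ * ∑ i ∈ Finset.range L, q ^ (m + i) := by rw [Finset.mul_sum]
          _ ≤ 2 * C * δ * (q ^ m / (1 - q)) := by
              apply mul_le_mul_of_nonneg_left (geom_tail_le hq0.le hq1 m L)
              positivity
          _ = C1 * δ * q ^ m := by rw [hC1]; ring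
      have hlim : Tendsto (fun L => ‖w (m + L)‖ + C1 * δ * q ^ m) atTop
          (𝓝 (0 + C1 * δ * q ^ m)) := by
        apply Tendsto.add _ tendsto_const_nhds
        have h5 : Tendsto (fun L : ℕ => m + L) atTop atTop := by
          simpa [Nat.add_comm] using tendsto_add_atTop_nat m
        simpa using (hw0.comp h5).norm
      have := ge_of_tendsto' hlim htel
      simpa using this
    -- bound on differences
    have db : ∀ m, N ≤ m → ‖x (m+1) - x m‖ ≤ C2 * δ * q ^ m := by
      intro m hm
      have hbe : (b m : ℂ) * (x (m+1) - x m) = w m + ((1:ℂ) - (b m : ℂ)) * x m := by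
        simp only [hw]; ring
      have h1 : ‖(b m : ℂ) * (x (m+1) - x m)‖ ≤ C1 * δ * q ^ m + C * q ^ m * δ := by
        rw [hbe]
        calc ‖w m + ((1:ℂ) - (b m : ℂ)) * x m‖ ≤ ‖w m‖ + ‖((1:ℂ) - (b m : ℂ)) * x m‖ :=
              norm_add_le _ _
          _ ≤ C1 * δ * q ^ m + C * q ^ m * δ := by
              apply add_le_add (wb m hm)
              rw [norm_mul]
              have e1 : ‖(1:ℂ) - (b m : ℂ)‖ ≤ C * q ^ m := by
                have : ((1:ℂ) - (b m : ℂ)) = ((1 - b m : ℝ) : ℂ) := by push_cast; ring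
                rw [this, Complex.norm_real, Real.norm_eq_abs, abs_sub_comm]
                exact hb m
              have e2 := hδb m hm
              have := norm_nonneg ((1:ℂ) - (b m : ℂ))
              have := norm_nonneg (x m)
              nlinarith
      have h2 : ‖(b m : ℂ) * (x (m+1) - x m)‖ = b m * ‖x (m+1) - x m‖ := by
        rw [norm_mul, Complex.norm_real, Real.norm_eq_abs, abs_of_pos (by linarith [hb2 m])]
      have hbm := hb2 m
      have h3 := norm_nonneg (x (m+1) - x m)
      rw [h2] at h1
      rw [hC2]
      nlinarith
    -- bound on x
    intro m hm
    have htel : ∀ L : ℕ, ‖x m‖ ≤ ‖x (m + L)‖ + C3 * δ * q ^ m := by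
      intro L
      have hsum0 : ∑ i ∈ Finset.range L, (x (m + i + 1) - x (m + i)) = x (m + L) - x m := by
        have := Finset.sum_range_sub (fun i => x (m + i)) L
        simpa [← Nat.add_assoc] using this
      have h1 : ‖x m‖ ≤ ‖x (m + L)‖ + ‖∑ i ∈ Finset.range L, (x (m + i + 1) - x (m + i))‖ := by
        rw [hsum0]
        calc ‖x m‖ = ‖x (m + L) - (x (m + L) - x m)‖ := by rw [sub_sub_cancel]
          _ ≤ ‖x (m + L)‖ + ‖x (m + L) - x m‖ := norm_sub_le _ _
      refine h1.trans ?_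
      gcongr
      calc ‖∑ i ∈ Finset.range L, (x (m + i + 1) - x (m + i))‖
          ≤ ∑ i ∈ Finset.range L, ‖x (m + i + 1) - x (m + i)‖ := norm_sum_le _ _
        _ ≤ ∑ i ∈ Finset.range L, C2 * δ * q ^ (m + i) := by
            apply Finset.sum_le_sum
            intro i _
            exact db (m + i) (by omega)
        _ = C2 * δ * ∑ i ∈ Finset.range L, q ^ (m + i) := by rw [Finset.mul_sum]
        _ ≤ C2 * δ * (q ^ m / (1 - q)) := by
            apply mul_le_mul_of_nonneg_left (geom_tail_le hq0.le hq1 m L)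
            positivity
        _ = C3 * δ * q ^ m := by rw [hC3]; ring
    have hlim : Tendsto (fun L => ‖x (m + L)‖ + C3 * δ * q ^ m) atTop
        (𝓝 (0 + C3 * δ * q ^ m)) := by
      apply Tendsto.add _ tendsto_const_nhds
      have h5 : Tendsto (fun L : ℕ => m + L) atTop atTop := by
        simpa [Nat.add_comm] using tendsto_add_atTop_nat m
      exact hxn.comp h5
    have := ge_of_tendsto' hlim htel
    simpa using this
  -- choose N
  obtain ⟨N2, hN2⟩ : ∃ n : ℕ, C3 * q ^ n ≤ 1 / 2 := by
    obtain ⟨n, hn⟩ := exists_pow_lt_of_lt_one (show (0:ℝ) < 1 / (2 * (C3 + 1)) by positivity) hq1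
    refine ⟨n, ?_⟩
    have h1 : C3 * q ^ n ≤ (C3 + 1) * q ^ n := by
      have := pow_nonneg hq0.le n; nlinarith
    have h2 : (C3 + 1) * q ^ n < (C3 + 1) * (1 / (2 * (C3 + 1))) := by
      apply mul_lt_mul_of_pos_left hn; linarith
    have h3 : (C3 + 1) * (1 / (2 * (C3 + 1))) = 1 / 2 := by
      field_simp
    linarith
  obtain ⟨N1, hN1⟩ : ∃ N1 : ℕ, ∀ m, N1 ≤ m → ‖x m‖ ≤ 1 := by
    have := Metric.tendsto_atTop.mp hx 1 one_pos
    obtain ⟨N1, h⟩ := this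
    exact ⟨N1, fun m hm => by have := h m hm; simp [Complex.dist_eq] at this; exact this.le⟩
  refine ⟨max N1 N2, fun m hm => ?_⟩
  have hiter : ∀ j : ℕ, ∀ m, max N1 N2 ≤ m → ‖x m‖ ≤ (1/2) ^ j := by
    intro j
    induction j with
    | zero => intro m hm; simpa using hN1 m (le_trans (le_max_left _ _) hm)
    | succ j ih =>
      intro m hm
      have h1 := hkey ((1/2)^j) (by positivity) (max N1 N2) ih m hm
      have h2 : q ^ m ≤ q ^ N2 := by
        apply pow_le_pow_of_le_one hq0.le hq1.le
        omega
      calc ‖x m‖ ≤ C3 * (1/2)^j * q ^ m := h1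
        _ ≤ C3 * (1/2)^j * q ^ N2 := by
            apply mul_le_mul_of_nonneg_left h2; positivity
        _ = (C3 * q ^ N2) * (1/2)^j := by ring
        _ ≤ (1/2) * (1/2)^j := by
            apply mul_le_mul_of_nonneg_right hN2; positivity
        _ = (1/2)^(j+1) := by ring
  have hz : ‖x m‖ ≤ 0 := by
    have hlim : Tendsto (fun j : ℕ => ((1:ℝ)/2) ^ j) atTop (𝓝 0) := by
      apply tendsto_pow_atTop_nhds_zero_of_lt_one <;> norm_num
    exact ge_of_tendsto' hlim (fun j => hiter j m hm)
  simpa using norm_le_zero_iff.mp hz 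

private lemma aseq_bound {q : ℝ} (hq0 : 0 < q) (hq1 : q < 1) {ψ r : ℝ} (hr : r ≠ 0)
    (aseq : ℤ → ℝ)
    (haseq : ∀ k : ℤ, aseq k =
      |r|⁻¹ * q ^ (-k) * Real.sqrt (1 - 2 * r * q ^ k * Real.sin ψ + r ^ 2 * q ^ (2 * k)))
    (hapos : ∀ k : ℤ, 0 < aseq k) (n : ℕ) :
    |aseq (-(n : ℤ) - 1) - 1| ≤ (q / |r|) * (q / |r| + 2) * q ^ n := by
  set k : ℤ := -(n : ℤ) - 1 with hk
  set t : ℝ := q ^ (n + 1) with htdef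
  have ht0 : 0 < t := pow_pos hq0 _
  have htne : t ≠ 0 := ht0.ne'
  have hrabs : 0 < |r| := abs_pos.mpr hr
  have hk1 : (q : ℝ) ^ (-k) = t := by
    have : -k = ((n + 1 : ℕ) : ℤ) := by rw [hk]; push_cast; ring
    rw [this, zpow_natCast]
  have hk2 : (q : ℝ) ^ k = t⁻¹ := by
    have : k = -((n + 1 : ℕ) : ℤ) := by rw [hk]; push_cast; ring
    rw [this, zpow_neg, zpow_natCast]
  have hk3 : (q : ℝ) ^ (2 * k) = (t ^ 2)⁻¹ := by
    have h1 : 2 * k = -((2 * n + 2 : ℕ) : ℤ) := by rw [hk]; push_cast; ring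
    have h2 : t ^ 2 = q ^ (2 * n + 2) := by rw [htdef, ← pow_mul]; ring_nf
    rw [h1, zpow_neg, zpow_natCast, h2]
  set R : ℝ := 1 - 2 * r * t⁻¹ * Real.sin ψ + r ^ 2 * (t ^ 2)⁻¹ with hR
  have hA : aseq k = |r|⁻¹ * t * Real.sqrt R := by
    rw [haseq k, hk1, hk2, hk3]
  set a : ℝ := aseq k with hadef
  have hapos' : 0 < a := hapos k
  have hsqrtpos : 0 < Real.sqrt R := by
    have h1 : 0 < |r|⁻¹ * t * Real.sqrt R := hA ▸ hapos'
    have h2 : 0 < |r|⁻¹ * t := by positivity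
    nlinarith [Real.sqrt_nonneg R]
  have hRpos : 0 < R := Real.sqrt_pos.mp hsqrtpos
  have hsq : a ^ 2 = (t / r) ^ 2 - 2 * (t / r) * Real.sin ψ + 1 := by
    have h1 : a ^ 2 = (|r|⁻¹ * t) ^ 2 * R := by
      rw [hA, mul_pow, Real.sq_sqrt hRpos.le]
    have h2 : (|r|⁻¹ * t) ^ 2 = (r ^ 2)⁻¹ * t ^ 2 := by
      rw [mul_pow, inv_pow, _root_.sq_abs]
    rw [h1, h2, hR]
    field_simp
  -- bound |a^2 - 1|
  have hsin : |Real.sin ψ| ≤ 1 := Real.abs_sin_le_one ψ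
  have htq : t = q * q ^ n := by rw [htdef, pow_succ]; ring
  have hqn0 : 0 ≤ q ^ n := pow_nonneg hq0.le n
  have hqn1 : q ^ n ≤ 1 := pow_le_one₀ hq0.le hq1.le
  have hs : |t / r| = (q / |r|) * q ^ n := by
    rw [abs_div, abs_of_pos ht0, htq]
    rw [div_eq_mul_inv, div_eq_mul_inv]
    ring
  have hsle : |t / r| ≤ q / |r| := by
    rw [hs]
    have h0 : 0 ≤ q / |r| := by positivity
    nlinarith
  have habs2 : |a ^ 2 - 1| ≤ (q / |r|) * (q / |r| + 2) * q ^ n := by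
    have h1 : a ^ 2 - 1 = (t / r) * ((t / r) - 2 * Real.sin ψ) := by rw [hsq]; ring
    rw [h1, abs_mul]
    have h2 : |t / r - 2 * Real.sin ψ| ≤ q / |r| + 2 := by
      calc |t / r - 2 * Real.sin ψ| ≤ |t / r| + |2 * Real.sin ψ| := abs_sub _ _
        _ ≤ q / |r| + 2 := by
            rw [abs_mul, _root_.abs_two]
            have := hsle
            nlinarith
    calc |t / r| * |t / r - 2 * Real.sin ψ| ≤ ((q / |r|) * q ^ n) * (q / |r| + 2) := by
          apply mul_le_mul (le_of_eq hs) h2 (abs_nonneg _)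
          positivity
      _ = (q / |r|) * (q / |r| + 2) * q ^ n := by ring
  -- from |a^2-1| to |a-1|
  have hB : 0 ≤ (q / |r|) * (q / |r| + 2) * q ^ n := by positivity
  have h2 := abs_le.mp habs2
  rw [abs_le]
  constructor <;> nlinarith [hapos', sq_nonneg (a - 1), sq_nonneg (a + 1)]

theorem stmt15
    (q : ℝ) (hq0 : 0 < q) (hq1 : q < 1)
    (ψ r : ℝ) (hr : r ≠ 0)
    (a t : ℂ)
    (ha : a = (Real.sqrt q : ℂ) * Complex.exp (Complex.I * ψ))
    (ht : t = Complex.I * (r : ℂ) * Complex.exp (-(Complex.I * ψ)))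
    (htpos : ∀ x : ℝ, 0 < x → t ≠ (x : ℂ))
    (aseq : ℤ → ℝ)
    (haseq : ∀ k : ℤ, aseq k =
      |r|⁻¹ * q ^ (-k) * Real.sqrt (1 - 2 * r * q ^ k * Real.sin ψ + r ^ 2 * q ^ (2 * k)))
    (hapos : ∀ k : ℤ, 0 < aseq k)
    (ε : ℝ) (hε : ε = 1 ∨ ε = -1)
    (ξ : ℤ → ℂ)
    (hrec : ∀ k : ℤ, 2 * (ε : ℂ) * ξ k = (aseq k : ℂ) * ξ (k + 1) + (aseq (k - 1) : ℂ) * ξ (k - 1))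
    (hsum : Summable fun k : ℤ => ‖ξ k‖ ^ 2) :
    ξ = 0 := by
  have hεne : (ε : ℂ) ≠ 0 := by rcases hε with h | h <;> simp [h]
  have hεsq : (ε : ℂ) * (ε : ℂ) = 1 := by rcases hε with h | h <;> norm_num [h]
  have hεinv : (ε : ℂ)⁻¹ = (ε : ℂ) := by
    rcases hε with h | h <;> norm_num [h]
  have hεabs : ‖(ε : ℂ)‖ = 1 := by rcases hε with h | h <;> norm_num [h]
  -- the gauge-transformed sequence
  set η : ℤ → ℂ := fun k => (ε : ℂ) ^ k * ξ k with hη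
  have hηrec : ∀ k : ℤ, 2 * η k = (aseq k : ℂ) * η (k + 1) + (aseq (k - 1) : ℂ) * η (k - 1) := by
    intro k
    simp only [hη]
    rw [zpow_add_one₀ hεne, zpow_sub_one₀ hεne, hεinv]
    linear_combination ((ε : ℂ) ^ k * (ε : ℂ)) * hrec k - 2 * ((ε : ℂ) ^ k) * ξ k * hεsq
  have hηabs : ∀ k : ℤ, ‖η k‖ = ‖ξ k‖ := by
    intro k
    simp only [hη]
    rw [norm_mul, norm_zpow, hεabs, one_zpow, one_mul]
  -- decay of η along -∞
  have hdecay : Tendsto (fun n : ℕ => η (-(n : ℤ))) atTop (𝓝 0) := by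
    have h1 : Tendsto (fun k : ℤ => ‖ξ k‖ ^ 2) cofinite (𝓝 0) :=
      hsum.tendsto_cofinite_zero
    have hinj : Function.Injective (fun n : ℕ => -(n : ℤ)) := by
      intro m n h; simpa using h
    have h2 : Tendsto (fun n : ℕ => -(n : ℤ)) atTop cofinite := by
      rw [← Nat.cofinite_eq_atTop]
      exact hinj.tendsto_cofinite
    have h3 : Tendsto (fun n : ℕ => ‖ξ (-(n : ℤ))‖ ^ 2) atTop (𝓝 0) := h1.comp h2
    have h4 : Tendsto (fun n : ℕ => ‖ξ (-(n : ℤ))‖) atTop (𝓝 0) := by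
      have h5 : Tendsto (fun n : ℕ => Real.sqrt (‖ξ (-(n : ℤ))‖ ^ 2)) atTop
          (𝓝 (Real.sqrt 0)) := (Real.continuous_sqrt.tendsto 0).comp h3
      rw [Real.sqrt_zero] at h5
      refine h5.congr fun n => ?_
      exact Real.sqrt_sq (norm_nonneg _)
    rw [tendsto_zero_iff_norm_tendsto_zero]
    refine h4.congr fun n => ?_
    rw [hηabs]
  -- constant
  set C : ℝ := (q / |r|) * (q / |r| + 2) with hC
  have hC0 : 0 ≤ C := by positivity
  obtain ⟨N₀, hN₀⟩ : ∃ n : ℕ, C * q ^ n ≤ 1 / 2 := by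
    obtain ⟨n, hn⟩ := exists_pow_lt_of_lt_one (show (0:ℝ) < 1 / (2 * (C + 1)) by positivity) hq1
    refine ⟨n, ?_⟩
    have h1 : C * q ^ n ≤ (C + 1) * q ^ n := by
      have := pow_nonneg hq0.le n; nlinarith
    have h2 : (C + 1) * q ^ n < (C + 1) * (1 / (2 * (C + 1))) := by
      apply mul_lt_mul_of_pos_left hn; linarith
    have h3 : (C + 1) * (1 / (2 * (C + 1))) = 1 / 2 := by field_simp
    linarith
  -- shifted sequences
  set b : ℕ → ℝ := fun n => aseq (-((n + N₀ : ℕ) : ℤ) - 1) with hb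
  set x : ℕ → ℂ := fun n => η (-((n + N₀ : ℕ) : ℤ)) with hx
  have hbbound : ∀ n, |b n - 1| ≤ (C * q ^ N₀) * q ^ n := by
    intro n
    have h1 := aseq_bound hq0 hq1 hr aseq haseq hapos (n + N₀)
    calc |b n - 1| ≤ C * q ^ (n + N₀) := h1
      _ = (C * q ^ N₀) * q ^ n := by rw [pow_add]; ring
  have hb2 : ∀ n, (1:ℝ)/2 ≤ b n := by
    intro n
    have h1 := hbbound n
    have h2 : (C * q ^ N₀) * q ^ n ≤ 1 / 2 := by
      have hqn1 : q ^ n ≤ 1 := pow_le_one₀ hq0.le hq1.le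
      have hpos : 0 ≤ C * q ^ N₀ := by positivity
      nlinarith
    have := abs_le.mp h1
    linarith [this.1]
  have hxrec : ∀ n : ℕ, 2 * x (n+1) = (b n : ℂ) * x n + (b (n+1) : ℂ) * x (n+2) := by
    intro n
    have h1 := hηrec (-((n + 1 + N₀ : ℕ) : ℤ))
    have e1 : (-((n + 1 + N₀ : ℕ) : ℤ)) + 1 = -((n + N₀ : ℕ) : ℤ) := by push_cast; ring
    have e2 : (-((n + 1 + N₀ : ℕ) : ℤ)) - 1 = -((n + 2 + N₀ : ℕ) : ℤ) := by push_cast; ring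
    have e3 : (-((n + 1 + N₀ : ℕ) : ℤ)) = -((n + N₀ : ℕ) : ℤ) - 1 := by push_cast; ring
    have e4 : (-((n + 2 + N₀ : ℕ) : ℤ)) = -((n + 1 + N₀ : ℕ) : ℤ) - 1 := by push_cast; ring
    rw [e1, e2] at h1
    simp only [hb, hx]
    rw [← e4, ← e3]
    exact h1
  have hxdecay : Tendsto x atTop (𝓝 0) := by
    have h5 : Tendsto (fun n : ℕ => n + N₀) atTop atTop := tendsto_add_atTop_nat N₀
    have := hdecay.comp h5
    refine this.congr fun n => ?_
    simp [hx]
  obtain ⟨N, hN⟩ := core_lemma hq0 hq1 (by positivity : (0:ℝ) ≤ C * q ^ N₀) b x hb2 hbbound hxrec hxdecay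
  -- η vanishes for k ≤ -(N + N₀)
  have hzero : ∀ k : ℤ, k ≤ -((N : ℤ) + (N₀ : ℤ)) → η k = 0 := by
    intro k hk
    have h1 : (0:ℤ) ≤ -k - N₀ := by omega
    set m : ℕ := (-k - N₀).toNat with hm
    have hm1 : (m : ℤ) = -k - N₀ := Int.toNat_of_nonneg h1
    have hm2 : N ≤ m := by omega
    have := hN m hm2
    simp only [hx] at this
    rw [(by push_cast; omega : ((m + N₀ : ℕ) : ℤ) = -k)] at this
    simpa using this
  -- propagate forward
  have hfwd : ∀ j : ℕ, η (-((N : ℤ) + (N₀ : ℤ)) - 1 + j) = 0 ∧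
      η (-((N : ℤ) + (N₀ : ℤ)) - 1 + j + 1) = 0 := by
    intro j
    induction j with
    | zero =>
      constructor
      · exact hzero _ (by push_cast; omega)
      · exact hzero _ (by push_cast; omega)
    | succ j ih =>
      obtain ⟨ih1, ih2⟩ := ih
      set k : ℤ := -((N : ℤ) + (N₀ : ℤ)) - 1 + j + 1 with hk
      have h1 := hηrec k
      have e1 : k - 1 = -((N : ℤ) + (N₀ : ℤ)) - 1 + j := by rw [hk]; ring
      rw [e1, ih1, ih2] at h1
      have h2 : (aseq k : ℂ) * η (k + 1) = 0 := by
        linear_combination -h1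
      have h3 : (aseq k : ℂ) ≠ 0 := by
        exact_mod_cast (hapos k).ne'
      have h4 : η (k + 1) = 0 := by
        rcases mul_eq_zero.mp h2 with h | h
        · exact absurd h h3
        · exact h
      constructor
      · rw [(by rw [hk]; push_cast; ring : -((N : ℤ) + (N₀ : ℤ)) - 1 + ((j + 1 : ℕ) : ℤ) = k)]
        exact ih2
      · rw [(by rw [hk]; push_cast; ring : -((N : ℤ) + (N₀ : ℤ)) - 1 + ((j + 1 : ℕ) : ℤ) + 1 = k + 1)]
        exact h4
  have hηall : ∀ k : ℤ, η k = 0 := by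
    intro k
    rcases le_or_gt k (-((N : ℤ) + (N₀ : ℤ))) with h | h
    · exact hzero k h
    · have h1 : (0:ℤ) ≤ k - (-((N : ℤ) + (N₀ : ℤ)) - 1) := by omega
      set j : ℕ := (k - (-((N : ℤ) + (N₀ : ℤ)) - 1)).toNat with hj
      have hj1 : (j : ℤ) = k - (-((N : ℤ) + (N₀ : ℤ)) - 1) := Int.toNat_of_nonneg h1
      have := (hfwd j).1
      rw [(by omega : -((N : ℤ) + (N₀ : ℤ)) - 1 + (j : ℤ) = k)] at this
      exact this
  funext k
  have h1 := hηall k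
  simp only [hη] at h1
  have h2 : (ε : ℂ) ^ k ≠ 0 := zpow_ne_zero k hεne
  rcases mul_eq_zero.mp h1 with h | h
  · exact absurd h h2
  · simpa using h
end
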